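/- arXiv:math/0610443 — 3 statements merged into one kernel-verified Lean document; each statement's English description precedes it below -/
import Mathlib

section
/- Let f : [−1,1] → [−1,1] be the continuous map defined by f(x) = 2x + 2 for −1 ≤ x ≤ −1/2, f(x) = −2x for −1/2 ≤ x ≤ 0, and f(x) = −x for 0 ≤ x ≤ 1. Then f is not turbulent, yet there exists δ > 0 and an uncountable δ-scrambled set S of f that is invariant under f. -/
open Filter Set Function

/-- `limsup_{n→∞} |fⁿ(x) − fⁿ(y)|`. -/
noncomputable def limsupD (f : ℝ → ℝ) (x y : ℝ) : ℝ :=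
  Filter.limsup (fun n : ℕ => |f^[n] x - f^[n] y|) Filter.atTop

/-- `liminf_{n→∞} |fⁿ(x) − fⁿ(y)|`. -/
noncomputable def liminfD (f : ℝ → ℝ) (x y : ℝ) : ℝ :=
  Filter.liminf (fun n : ℕ => |f^[n] x - f^[n] y|) Filter.atTop

/-- `p` is a periodic point of `f`. -/
def PerPt (f : ℝ → ℝ) (p : ℝ) : Prop := ∃ m : ℕ, 0 < m ∧ f^[m] p = p

/-- `p` is a periodic point of `f` of least period `k`. -/
def LeastPeriod (f : ℝ → ℝ) (p : ℝ) (k : ℕ) : Prop :=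
  f^[k] p = p ∧ ∀ i : ℕ, 0 < i → i < k → f^[i] p ≠ p

/-- `S ⊆ I` is a `δ`-scrambled set of the map `f : I → I`. -/
def ScrambledSet (f : ℝ → ℝ) (I : Set ℝ) (δ : ℝ) (S : Set ℝ) : Prop :=
  S ⊆ I ∧
  (∀ x ∈ S, ∀ y ∈ S, x ≠ y → δ ≤ limsupD f x y ∧ liminfD f x y = 0) ∧
  (∀ x ∈ S, ∀ p ∈ I, PerPt f p → δ / 2 ≤ limsupD f x p)

/-- The ω-limit set of `x` under `f`: the set of limit points of the orbit of `x`. -/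
def OmegaSet (f : ℝ → ℝ) (x : ℝ) : Set ℝ :=
  {y : ℝ | ∀ ε > 0, ∀ N : ℕ, ∃ n ≥ N, |f^[n] x - y| < ε}

/-- `x` is a recurrent point of `f`. -/
def RecPt (f : ℝ → ℝ) (x : ℝ) : Prop := x ∈ OmegaSet f x

/-- `f` is turbulent on `I`: there are closed nondegenerate subintervals `J₀, J₁` of `I`
with at most one common point with `f(J₀) ∩ f(J₁) ⊇ J₀ ∪ J₁`. -/
def Turbulent (f : ℝ → ℝ) (I : Set ℝ) : Prop :=
  ∃ p q r s : ℝ, p < q ∧ r < s ∧ Set.Icc p q ⊆ I ∧ Set.Icc r s ⊆ I ∧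
    (Set.Icc p q ∩ Set.Icc r s).Subsingleton ∧
    Set.Icc p q ∪ Set.Icc r s ⊆ f '' Set.Icc p q ∩ f '' Set.Icc r s

/-- `f` is strictly turbulent on `I`: the two intervals can be chosen disjoint. -/
def StrictlyTurbulent (f : ℝ → ℝ) (I : Set ℝ) : Prop :=
  ∃ p q r s : ℝ, p < q ∧ r < s ∧ Set.Icc p q ⊆ I ∧ Set.Icc r s ⊆ I ∧
    Disjoint (Set.Icc p q) (Set.Icc r s) ∧
    Set.Icc p q ∪ Set.Icc r s ⊆ f '' Set.Icc p q ∩ f '' Set.Icc r s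


namespace NT

/-- The tent map. -/
noncomputable def Tm (y : ℝ) : ℝ := 1 - |1 - 2*y|

lemma Tm_left {y : ℝ} (h : y ≤ 1/2) : Tm y = 2*y := by
  unfold Tm; rw [abs_of_nonneg (by linarith)]; ring

lemma Tm_right {y : ℝ} (h : 1/2 ≤ y) : Tm y = 2 - 2*y := by
  unfold Tm; rw [abs_of_nonpos (by linarith)]; ring

lemma Tm_zero : Tm 0 = 0 := by rw [Tm_left (by norm_num)]; ring

lemma Tm_mem {y : ℝ} (h : y ∈ Icc (0:ℝ) 1) : Tm y ∈ Icc (0:ℝ) 1 := by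
  obtain ⟨h0, h1⟩ := h
  rcases le_total y (1/2) with h' | h'
  · rw [Tm_left h']; constructor <;> linarith
  · rw [Tm_right h']; constructor <;> linarith

lemma Tm_iter_mem {y : ℝ} (h : y ∈ Icc (0:ℝ) 1) (n : ℕ) : Tm^[n] y ∈ Icc (0:ℝ) 1 := by
  induction n with
  | zero => exact h
  | succ n ih => rw [Function.iterate_succ_apply']; exact Tm_mem ih

lemma Tm_one_sub (y : ℝ) : Tm (1 - y) = Tm y := by
  unfold Tm
  rw [show (1 - 2*(1-y)) = -(1 - 2*y) by ring, abs_neg]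

/-! ### Digit layout -/

/-- length of zero runs in block `k` -/
def Z (k : ℕ) : ℕ := k + 10

/-- length of block `k` -/
def blen (k : ℕ) : ℕ := 3*(k+1) + 2*(Z k) + 1

/-- start position of block `k` -/
def st : ℕ → ℕ
  | 0 => 0
  | k+1 => st k + blen k

/-- marker position in block `k` -/
def mrk (k : ℕ) : ℕ := st k + 3*(k+1) + Z k

lemma st_ge (k : ℕ) : k ≤ st k := by
  induction k with
  | zero => simp [st]
  | succ k ih => have : 1 ≤ blen k := by unfold blen; omega
                 simp only [st]; omega

lemma st_mono : Monotone st := by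
  apply monotone_nat_of_le_succ
  intro k
  simp only [st]
  omega

/-- block index of position `n` -/
def blk (n : ℕ) : ℕ := Nat.findGreatest (fun k => st k ≤ n) n

lemma blk_eq {k n : ℕ} (h1 : st k ≤ n) (h2 : n < st (k+1)) : blk n = k := by
  rw [blk, Nat.findGreatest_eq_iff]
  refine ⟨le_trans (st_ge k) h1, fun _ => h1, fun K hK hK' hP => ?_⟩
  exact absurd (le_trans (st_mono (by omega : k + 1 ≤ K)) hP) (by omega)

/-- digit at offset `o` within block `k`, for parameter `t` -/
def g (t : ℕ → Bool) (k o : ℕ) : Bool :=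
  if o < 3*(k+1) then (if o % 3 = 0 then false else t (o / 3))
  else if o = 3*(k+1) + Z k then true else false

/-- the full digit sequence for parameter `t` -/
def D (t : ℕ → Bool) (n : ℕ) : Bool := g t (blk n) (n - st (blk n))

lemma D_eval (t : ℕ → Bool) {k o : ℕ} (ho : o < blen k) : D t (st k + o) = g t k o := by
  have h1 : st k ≤ st k + o := by omega
  have h2 : st k + o < st (k+1) := by simp only [st]; omega
  rw [D, blk_eq h1 h2, Nat.add_sub_cancel_left]

lemma D_sep (t : ℕ → Bool) {k j : ℕ} (hj : j ≤ k) : D t (st k + 3*j) = false := by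
  rw [D_eval t (by unfold blen; omega)]
  unfold g
  rw [if_pos (by omega), if_pos (by omega)]

lemma D_enc1 (t : ℕ → Bool) {k j : ℕ} (hj : j ≤ k) : D t (st k + (3*j+1)) = t j := by
  rw [D_eval t (by unfold blen; omega)]
  unfold g
  rw [if_pos (by omega), if_neg (by omega)]
  congr 1
  omega

lemma D_enc2 (t : ℕ → Bool) {k j : ℕ} (hj : j ≤ k) : D t (st k + (3*j+2)) = t j := by
  rw [D_eval t (by unfold blen; omega)]
  unfold g
  rw [if_pos (by omega), if_neg (by omega)]
  congr 1
  omega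

lemma D_run1 (t : ℕ → Bool) {k i : ℕ} (hi : i < Z k) : D t (st k + (3*(k+1) + i)) = false := by
  rw [D_eval t (by unfold blen; omega)]
  unfold g
  rw [if_neg (by omega), if_neg (by omega)]

lemma D_mark (t : ℕ → Bool) (k : ℕ) : D t (mrk k) = true := by
  have : mrk k = st k + (3*(k+1) + Z k) := by unfold mrk; omega
  rw [this, D_eval t (by unfold blen; omega)]
  unfold g
  rw [if_neg (by omega), if_pos rfl]

lemma D_run2 (t : ℕ → Bool) {k i : ℕ} (hi : i < Z k) :
    D t (mrk k + 1 + i) = false := by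
  have : mrk k + 1 + i = st k + (3*(k+1) + Z k + 1 + i) := by unfold mrk; omega
  rw [this, D_eval t (by unfold blen; omega)]
  unfold g
  rw [if_neg (by omega), if_neg (by omega)]

noncomputable def dv (b : Bool) : ℝ := if b then 1 else 0

lemma dv_nonneg (b : Bool) : 0 ≤ dv b := by unfold dv; split <;> norm_num
lemma dv_le_one (b : Bool) : dv b ≤ 1 := by unfold dv; split <;> norm_num

noncomputable def tail (t : ℕ → Bool) (n : ℕ) : ℝ := ∑' i : ℕ, dv (D t (n+i)) * (1/2)^(i+1)

lemma summable_tail (t : ℕ → Bool) (n : ℕ) :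
    Summable (fun i : ℕ => dv (D t (n+i)) * (1/2:ℝ)^(i+1)) := by
  have hg : Summable (fun i : ℕ => (1/2:ℝ)^(i+1)) := by
    simpa [pow_succ'] using (summable_geometric_of_lt_one (by norm_num : (0:ℝ) ≤ 1/2)
      (by norm_num)).mul_left (1/2 : ℝ)
  refine Summable.of_nonneg_of_le (fun i => ?_) (fun i => ?_) hg
  · exact mul_nonneg (dv_nonneg _) (by positivity)
  · calc dv (D t (n+i)) * (1/2:ℝ)^(i+1) ≤ 1 * (1/2:ℝ)^(i+1) := by
          exact mul_le_mul_of_nonneg_right (dv_le_one _) (by positivity)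
    _ = (1/2:ℝ)^(i+1) := one_mul _

lemma tail_nonneg (t : ℕ → Bool) (n : ℕ) : 0 ≤ tail t n :=
  tsum_nonneg fun i => mul_nonneg (dv_nonneg _) (by positivity)

lemma tsum_halves : ∑' i : ℕ, (1/2:ℝ)^(i+1) = 1 := by
  have : ∑' i : ℕ, (1/2:ℝ)^(i+1) = (1/2) * ∑' i : ℕ, (1/2:ℝ)^i := by
    rw [← tsum_mul_left]
    congr 1; funext i; rw [pow_succ']
  rw [this, tsum_geometric_of_lt_one (by norm_num) (by norm_num)]
  norm_num

lemma tail_le_one (t : ℕ → Bool) (n : ℕ) : tail t n ≤ 1 := by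
  have := Summable.tsum_le_tsum (f := fun i : ℕ => dv (D t (n+i)) * (1/2:ℝ)^(i+1))
    (g := fun i : ℕ => (1/2:ℝ)^(i+1)) (fun i => by
      calc dv (D t (n+i)) * (1/2:ℝ)^(i+1) ≤ 1 * (1/2:ℝ)^(i+1) :=
            mul_le_mul_of_nonneg_right (dv_le_one _) (by positivity)
      _ = (1/2:ℝ)^(i+1) := one_mul _)
    (summable_tail t n) (by
      simpa [pow_succ'] using (summable_geometric_of_lt_one (by norm_num : (0:ℝ) ≤ 1/2)
        (by norm_num)).mul_left (1/2 : ℝ))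
  rw [tsum_halves] at this
  exact this

lemma tail_rec (t : ℕ → Bool) (n : ℕ) :
    tail t n = dv (D t n) / 2 + tail t (n+1) / 2 := by
  rw [tail, Summable.tsum_eq_zero_add (summable_tail t n)]
  congr 1
  · simp [pow_one]; ring
  · have : ∀ i : ℕ, dv (D t (n+(i+1))) * (1/2:ℝ)^(i+1+1)
        = (1/2) * (dv (D t ((n+1)+i)) * (1/2)^(i+1)) := by
      intro i
      rw [show n+(i+1) = (n+1)+i by omega]
      ring
    rw [tsum_congr this, tsum_mul_left, tail]
    ring


lemma tail_shift (t : ℕ → Bool) {n k : ℕ} (h : ∀ i < k, D t (n+i) = false) :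
    tail t n = (1/2)^k * tail t (n+k) := by
  induction k generalizing n with
  | zero => simp
  | succ k ih =>
    have h0 : D t n = false := by simpa using h 0 (by omega)
    rw [tail_rec, h0]
    have hrec := ih (n := n+1) (fun i hi => by
      rw [show n+1+i = n+(i+1) by omega]; exact h (i+1) (by omega))
    rw [hrec, show n+1+k = n+(k+1) by omega]
    unfold dv
    norm_num
    ring

lemma tail_zero_le (t : ℕ → Bool) {n k : ℕ} (h : ∀ i < k, D t (n+i) = false) :
    tail t n ≤ (1/2)^k := by
  rw [tail_shift t h]
  calc (1/2:ℝ)^k * tail t (n+k) ≤ (1/2)^k * 1 :=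
        mul_le_mul_of_nonneg_left (tail_le_one t _) (by positivity)
  _ = (1/2)^k := mul_one _

lemma tail_ge_half (t : ℕ → Bool) {n : ℕ} (h : D t n = true) : 1/2 ≤ tail t n := by
  rw [tail_rec, h]
  have := tail_nonneg t (n+1)
  unfold dv
  norm_num
  linarith

lemma tail_ge_34 (t : ℕ → Bool) {n : ℕ} (h : D t n = true) (h' : D t (n+1) = true) :
    3/4 ≤ tail t n := by
  rw [tail_rec, h, tail_rec, h']
  have := tail_nonneg t (n+1+1)
  unfold dv
  norm_num
  linarith

/-- the orbit values of `xv t` under the tent map -/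
noncomputable def ev (t : ℕ → Bool) : ℕ → ℝ
  | 0 => tail t 0
  | (m+1) => if D t m then 1 - tail t (m+1) else tail t (m+1)

lemma ev_succ (t : ℕ → Bool) (m : ℕ) :
    ev t (m+1) = if D t m then 1 - tail t (m+1) else tail t (m+1) := rfl

/-- the point of the scrambled set associated to the parameter `t` -/
noncomputable def xv (t : ℕ → Bool) : ℝ := tail t 0

lemma Tm_tail (t : ℕ → Bool) (n : ℕ) :
    Tm (tail t n) = if D t n then 1 - tail t (n+1) else tail t (n+1) := by
  have h1 := tail_nonneg t (n+1)
  have h2 := tail_le_one t (n+1)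
  cases h : D t n with
  | true =>
      rw [if_pos rfl]
      have : tail t n = 1/2 + tail t (n+1)/2 := by rw [tail_rec, h]; unfold dv; norm_num
      rw [this, Tm_right (by linarith)]
      ring
  | false =>
      rw [if_neg (by simp)]
      have : tail t n = tail t (n+1)/2 := by rw [tail_rec, h]; unfold dv; norm_num
      rw [this, Tm_left (by linarith)]
      ring

lemma ev_orbit (t : ℕ → Bool) : ∀ n, Tm^[n] (xv t) = ev t n := by
  intro n
  induction n with
  | zero => rfl
  | succ n ih =>
      rw [Function.iterate_succ_apply', ih]
      cases n with
      | zero =>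
          show Tm (tail t 0) = ev t 1
          rw [Tm_tail, ev_succ]
      | succ m =>
          show Tm (ev t (m+1)) = ev t (m+2)
          rw [ev_succ, ev_succ t (m+1)]
          cases h : D t m with
          | true => rw [if_pos rfl, Tm_one_sub, Tm_tail]
          | false => rw [if_neg (by simp), Tm_tail]

lemma ev_mem (t : ℕ → Bool) (n : ℕ) : ev t n ∈ Icc (0:ℝ) 1 := by
  cases n with
  | zero => exact ⟨tail_nonneg t 0, tail_le_one t 0⟩
  | succ m =>
      rw [ev_succ]
      have h1 := tail_nonneg t (m+1)
      have h2 := tail_le_one t (m+1)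
      split <;> constructor <;> linarith

lemma xv_mem (t : ℕ → Bool) : xv t ∈ Icc (0:ℝ) 1 := ⟨tail_nonneg t 0, tail_le_one t 0⟩

lemma half_pow_le {A B : ℕ} (h : A ≤ B) : ((1:ℝ)/2)^B ≤ (1/2)^A :=
  pow_le_pow_of_le_one (by norm_num) (by norm_num) h

/-- the probe value: near 1 -/
lemma E1 (t : ℕ → Bool) (k : ℕ) : 1 - (1/2)^(Z k) ≤ ev t (mrk k + 1) := by
  show 1 - (1/2:ℝ)^(Z k) ≤ ev t (mrk k + 1)
  have hm : D t (mrk k) = true := D_mark t k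
  have : ev t (mrk k + 1) = 1 - tail t (mrk k + 1) := by rw [ev_succ, hm]; simp
  rw [this]
  have : tail t (mrk k + 1) ≤ (1/2)^(Z k) :=
    tail_zero_le t (fun i hi => D_run2 t hi)
  linarith

lemma E1' (t : ℕ → Bool) (k : ℕ) : 3/4 ≤ ev t (mrk k + 1) := by
  have := E1 t k
  have h2 : ((1:ℝ)/2)^(Z k) ≤ (1/2)^2 := half_pow_le (by unfold Z; omega)
  norm_num at h2
  linarith

/-- values inside the second zero run: small -/
lemma E2 (t : ℕ → Bool) {k r : ℕ} (h1 : 1 ≤ r) (h2 : r ≤ Z k) :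
    ev t (mrk k + 1 + r) ≤ (1/2)^(Z k - r) := by
  have hprev : D t (mrk k + r) = false := by
    have : mrk k + r = mrk k + 1 + (r - 1) := by omega
    rw [this]
    exact D_run2 t (by omega)
  have hev : ev t (mrk k + 1 + r) = tail t (mrk k + 1 + r) := by
    have h3 : mrk k + 1 + r = (mrk k + r) + 1 := by omega
    rw [h3, ev_succ, hprev]
    simp
  rw [hev]
  apply tail_zero_le t
  intro i hi
  have : mrk k + 1 + r + i = mrk k + 1 + (r + i) := by omega
  rw [this]
  exact D_run2 t (by omega)

/-- encoding values -/
lemma E3t (t : ℕ → Bool) {k j : ℕ} (hj : j ≤ k) (h : t j = true) :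
    3/4 ≤ ev t (st k + 3*j + 1) := by
  have hprev : D t (st k + 3*j) = false := D_sep t hj
  have hev : ev t (st k + 3*j + 1) = tail t (st k + 3*j + 1) := by
    rw [show st k + 3*j + 1 = (st k + 3*j) + 1 from rfl, ev_succ, hprev]
    simp
  rw [hev]
  have e1 : D t (st k + 3*j + 1) = true := by
    rw [show st k + 3*j + 1 = st k + (3*j+1) by omega]
    rw [D_enc1 t hj]; exact h
  have e2 : D t (st k + 3*j + 1 + 1) = true := by
    rw [show st k + 3*j + 1 + 1 = st k + (3*j+2) by omega]
    rw [D_enc2 t hj]; exact h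
  exact tail_ge_34 t e1 e2

lemma E3f (t : ℕ → Bool) {k j : ℕ} (hj : j ≤ k) (h : t j = false) :
    ev t (st k + 3*j + 1) ≤ 1/8 := by
  have hprev : D t (st k + 3*j) = false := D_sep t hj
  have hev : ev t (st k + 3*j + 1) = tail t (st k + 3*j + 1) := by
    rw [show st k + 3*j + 1 = (st k + 3*j) + 1 from rfl, ev_succ, hprev]
    simp
  rw [hev]
  have h8 : ((1:ℝ)/2)^3 = 1/8 := by norm_num
  rw [← h8]
  apply tail_zero_le t
  intro i hi
  interval_cases i
  · rw [show st k + 3*j + 1 + 0 = st k + (3*j+1) by omega, D_enc1 t hj]; exact h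
  · rw [show st k + 3*j + 1 + 1 = st k + (3*j+2) by omega, D_enc2 t hj]; exact h
  · rcases Nat.lt_or_ge j k with h' | h'
    · rw [show st k + 3*j + 1 + 2 = st k + 3*(j+1) by omega]
      exact D_sep t (by omega)
    · have hjk : j = k := by omega
      rw [hjk, show st k + 3*k + 1 + 2 = st k + (3*(k+1) + 0) by omega]
      exact D_run1 t (by unfold Z; omega)

lemma ENCdiff {s t : ℕ → Bool} {j : ℕ} (h : s j ≠ t j) {k : ℕ} (hj : j ≤ k) :
    1/2 ≤ |ev s (st k + 3*j + 1) - ev t (st k + 3*j + 1)| := by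
  have key : ∀ u w : ℕ → Bool, u j = true → w j = false →
      1/2 ≤ |ev u (st k + 3*j + 1) - ev w (st k + 3*j + 1)| := by
    intro u w hu hw
    have h1 := E3t u hj hu
    have h2 := E3f w hj hw
    rw [abs_of_nonneg (by linarith)]
    linarith
  cases hs : s j with
  | true => exact key s t hs (by cases ht : t j; rfl; exact absurd (hs.trans ht.symm) h)
  | false =>
      rw [abs_sub_comm]
      refine key t s ?_ hs
      cases ht : t j
      · exact absurd (hs.trans ht.symm) h
      · rfl

/-! ### limsup / liminf helpers -/

lemma freq_le_limsupD {f : ℝ → ℝ} {u v c : ℝ} (C : ℝ)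
    (hb : ∀ n, |f^[n] u - f^[n] v| ≤ C)
    (hf : ∀ N, ∃ n ≥ N, c ≤ |f^[n] u - f^[n] v|) : c ≤ limsupD f u v := by
  unfold limsupD
  apply Filter.le_limsup_of_frequently_le
  · rw [Filter.frequently_atTop]
    exact hf
  · exact Filter.isBoundedUnder_of ⟨C, fun n => hb n⟩

lemma liminfD_zero {f : ℝ → ℝ} {u v : ℝ} (C : ℝ)
    (hb : ∀ n, |f^[n] u - f^[n] v| ≤ C)
    (hf : ∀ ε > (0:ℝ), ∀ N, ∃ n ≥ N, |f^[n] u - f^[n] v| ≤ ε) : liminfD f u v = 0 := by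
  unfold liminfD
  have hlb : Filter.IsBoundedUnder (· ≥ ·) Filter.atTop
      (fun n : ℕ => |f^[n] u - f^[n] v|) :=
    Filter.isBoundedUnder_of ⟨0, fun n => abs_nonneg _⟩
  apply le_antisymm
  · apply le_of_forall_pos_le_add
    intro ε hε
    have : Filter.liminf (fun n : ℕ => |f^[n] u - f^[n] v|) Filter.atTop ≤ ε := by
      apply Filter.liminf_le_of_frequently_le _ hlb
      rw [Filter.frequently_atTop]
      exact hf ε hε
    simpa using this
  · apply Filter.le_liminf_of_le
    · exact Filter.IsBoundedUnder.isCoboundedUnder_ge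
        (Filter.isBoundedUnder_of ⟨C, fun n => hb n⟩)
    · exact Filter.Eventually.of_forall (fun n => abs_nonneg _)

/-! ### bridge between `f` and the tent map -/

section Fbridge

variable {f : ℝ → ℝ}

lemma FIT2 (hA : ∀ y ∈ Icc (0:ℝ) 1, f y = -y) (hB : ∀ y ∈ Icc (-1:ℝ) 0, f y = Tm (-y))
    {y : ℝ} (hy : y ∈ Icc (0:ℝ) 1) :
    ∀ k, f^[2*k] y = Tm^[k] y ∧ f^[2*k+1] y = -(Tm^[k] y) := by
  intro k
  induction k with
  | zero =>
      refine ⟨rfl, ?_⟩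
      show f^[1] y = -(y)
      simpa using hA y hy
  | succ k ih =>
      have hT := Tm_iter_mem hy k
      have heven : f^[2*(k+1)] y = Tm^[k+1] y := by
        have h1 : (2*(k+1)) = (2*k+1)+1 := by omega
        rw [h1, Function.iterate_succ_apply', ih.2]
        rw [hB (-(Tm^[k] y)) ⟨by linarith [hT.2], by linarith [hT.1]⟩, neg_neg]
        exact (Function.iterate_succ_apply' Tm k y).symm
      refine ⟨heven, ?_⟩
      have h2 : (2*(k+1)+1) = (2*(k+1))+1 := by omega
      rw [h2, Function.iterate_succ_apply', heven]
      exact hA _ (Tm_iter_mem hy (k+1))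

lemma FITeven (hA : ∀ y ∈ Icc (0:ℝ) 1, f y = -y) (hB : ∀ y ∈ Icc (-1:ℝ) 0, f y = Tm (-y))
    {y : ℝ} (hy : y ∈ Icc (0:ℝ) 1) {n : ℕ} (hn : Even n) :
    f^[n] y = Tm^[n/2] y := by
  obtain ⟨k, hk⟩ := hn
  have : n = 2*k := by omega
  subst this
  rw [(FIT2 hA hB hy k).1, Nat.mul_div_cancel_left _ (by norm_num)]

lemma FITodd (hA : ∀ y ∈ Icc (0:ℝ) 1, f y = -y) (hB : ∀ y ∈ Icc (-1:ℝ) 0, f y = Tm (-y))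
    {y : ℝ} (hy : y ∈ Icc (0:ℝ) 1) {n : ℕ} (hn : ¬ Even n) :
    f^[n] y = -(Tm^[n/2] y) := by
  obtain ⟨k, hk⟩ := Nat.odd_iff.mpr (Nat.not_even_iff.mp hn)
  have h1 : n = 2*k+1 := by omega
  have h2 : n/2 = k := by omega
  rw [h2, h1]
  exact (FIT2 hA hB hy k).2

lemma FABS (hA : ∀ y ∈ Icc (0:ℝ) 1, f y = -y) (hB : ∀ y ∈ Icc (-1:ℝ) 0, f y = Tm (-y))
    {y : ℝ} (hy : y ∈ Icc (0:ℝ) 1) (n : ℕ) :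
    |f^[n] y| = Tm^[n/2] y := by
  have hT := Tm_iter_mem hy (n/2)
  by_cases hn : Even n
  · rw [FITeven hA hB hy hn]
    exact abs_of_nonneg hT.1
  · rw [FITodd hA hB hy hn, abs_neg]
    exact abs_of_nonneg hT.1

lemma fmaps (hA : ∀ y ∈ Icc (0:ℝ) 1, f y = -y) (hB : ∀ y ∈ Icc (-1:ℝ) 0, f y = Tm (-y))
    {y : ℝ} (hy : y ∈ Icc (-1:ℝ) 1) : f y ∈ Icc (-1:ℝ) 1 := by
  rcases le_total y 0 with h | h
  · rw [hB y ⟨hy.1, h⟩]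
    have := Tm_mem (y := -y) ⟨by linarith, by linarith [hy.1]⟩
    exact ⟨by linarith [this.1], this.2⟩
  · rw [hA y ⟨h, hy.2⟩]
    constructor <;> [linarith [hy.2]; linarith]

lemma fiter_mem (hA : ∀ y ∈ Icc (0:ℝ) 1, f y = -y) (hB : ∀ y ∈ Icc (-1:ℝ) 0, f y = Tm (-y))
    {y : ℝ} (hy : y ∈ Icc (-1:ℝ) 1) (n : ℕ) : f^[n] y ∈ Icc (-1:ℝ) 1 := by
  induction n with
  | zero => exact hy
  | succ n ih => rw [Function.iterate_succ_apply']; exact fmaps hA hB ih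

end Fbridge

/-! ### periodic orbit machinery for the tent map -/

lemma Tm_iter_pos {q : ℝ} (hq : q ∈ Icc (0:ℝ) 1) {m : ℕ} (hm : 0 < m)
    (hper : Tm^[m] q = q) (hq0 : q ≠ 0) : ∀ i, 0 < Tm^[i] q := by
  intro i
  rcases lt_or_eq_of_le (Tm_iter_mem hq i).1 with h | h
  · exact h
  · exfalso
    apply hq0
    have hmul : Tm^[m*(i+1)] q = q := by
      have : Function.IsPeriodicPt Tm m q := hper
      exact (this.mul_const (i+1))
    have hle : i ≤ m*(i+1) := by
      have := Nat.le_mul_of_pos_left (i+1) hm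
      omega
    have : Tm^[m*(i+1)] q = 0 := by
      rw [show m*(i+1) = (m*(i+1) - i) + i by omega, Function.iterate_add_apply, ← h,
        Function.iterate_fixed Tm_zero]
    rw [← hmul, this]

lemma shift_periodic {q : ℝ} {m : ℕ} (hm : 0 < m) (hper : Tm^[m] q = q) (e : ℕ) :
    ∃ qe : ℝ, (∀ i, Tm^[i] qe = Tm^[i + (m*(e+1) - e)] q) ∧
      (∀ K, e ≤ K → Tm^[K] qe = Tm^[K - e] q) := by
  refine ⟨Tm^[m*(e+1) - e] q, fun i => (Function.iterate_add_apply Tm i _ q).symm, ?_⟩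
  intro K hK
  rw [(Function.iterate_add_apply Tm K _ q).symm]
  have hle : e + 1 ≤ m*(e+1) := Nat.le_mul_of_pos_left (e+1) hm
  have heq : K + (m*(e+1) - e) = (K - e) + m*(e+1) := by omega
  rw [heq, Function.iterate_add_apply]
  congr 1
  exact (Function.IsPeriodicPt.mul_const (hper : Function.IsPeriodicPt Tm m q) (e+1))

/-- Key comparison: the orbit of `xv t` frequently stays 1/4 away from any
positive periodic orbit of the tent map. -/
lemma PC (t : ℕ → Bool) {q v : ℝ} (hq : q ∈ Icc (0:ℝ) 1)
    (hv : 0 < v) (hvle : ∀ i, v ≤ Tm^[i] q) :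
    ∀ N, ∃ K ≥ N, 1/4 ≤ |Tm^[K] (xv t) - Tm^[K] q| := by
  intro N
  by_contra hcon
  push_neg at hcon
  obtain ⟨j0, hj0⟩ := pow_unbounded_of_one_lt (R := ℝ) (y := 2) (1/v) one_lt_two
  set k := max N (j0 + 3) with hk
  set A := mrk k + 2 with hA
  have hstk := st_ge k
  have hAN : N ≤ A := by
    have : k ≤ mrk k := by unfold mrk; omega
    omega
  have hZk : j0 + 13 ≤ Z k := by unfold Z; omega
  have hwin : ∀ j, j ≤ j0 → Tm^[A + j] (xv t) ≤ 1/4 := by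
    intro j hj
    rw [ev_orbit, show A + j = mrk k + 1 + (1 + j) by omega]
    have h1 := E2 t (k := k) (r := 1 + j) (by omega) (by omega)
    have h2 : ((1:ℝ)/2)^(Z k - (1+j)) ≤ (1/2)^2 := half_pow_le (by omega)
    norm_num at h2
    linarith
  have hq2 : ∀ j, j ≤ j0 → Tm^[A+j] q < 1/2 := by
    intro j hj
    have h1 := (abs_lt.mp (hcon (A+j) (by omega))).1
    have h2 := hwin j hj
    linarith
  have hdouble : ∀ j, j ≤ j0 → Tm^[A+j] q = 2^j * Tm^[A] q := by
    intro j
    induction j with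
    | zero => intro _; simp
    | succ j ih =>
        intro hj
        have hlt := hq2 j (by omega)
        rw [show A + (j+1) = (A+j) + 1 by omega, Function.iterate_succ_apply',
          Tm_left (le_of_lt hlt), ih (by omega)]
        ring
  have h1 := hq2 j0 le_rfl
  have h2 := hdouble j0 le_rfl
  have h3 := hvle A
  have h4 : (1:ℝ) < 2^j0 * v := by
    have := (div_lt_iff₀ hv).mp hj0
    linarith
  have h5 : (2:ℝ)^j0 * v ≤ 2^j0 * Tm^[A] q :=
    mul_le_mul_of_nonneg_left h3 (by positivity)
  linarith

/-! ### Non-turbulence -/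

lemma cover_core {f : ℝ → ℝ} {a b c d u v : ℝ} (hf : ContinuousOn f (Icc a b))
    (hcd : c ≤ d) (hu : u ∈ Icc a b) (hv : v ∈ Icc a b) (huv : u ≤ v)
    (hfu : f u = c) (hfv : f v = d) :
    ∃ a' b', a' ≤ b' ∧ Icc a' b' ⊆ Icc a b ∧ f '' Icc a' b' = Icc c d := by
  have hIuv : Icc u v ⊆ Icc a b := Icc_subset_Icc hu.1 hv.2
  have hfuv : ContinuousOn f (Icc u v) := hf.mono hIuv
  have hSbc : IsClosed (Icc u v ∩ f ⁻¹' {d}) :=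
    hfuv.preimage_isClosed_of_isClosed isClosed_Icc isClosed_singleton
  have hSbne : (Icc u v ∩ f ⁻¹' {d}).Nonempty := ⟨v, ⟨⟨huv, le_rfl⟩, hfv⟩⟩
  have hSbbdd : BddBelow (Icc u v ∩ f ⁻¹' {d}) := ⟨u, fun x hx => hx.1.1⟩
  set b' := sInf (Icc u v ∩ f ⁻¹' {d}) with hb'def
  have hb'mem : b' ∈ Icc u v ∩ f ⁻¹' {d} := hSbc.csInf_mem hSbne hSbbdd
  have hfb' : f b' = d := hb'mem.2
  have hfub : ContinuousOn f (Icc u b') := hfuv.mono (Icc_subset_Icc le_rfl hb'mem.1.2)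
  have hSac : IsClosed (Icc u b' ∩ f ⁻¹' {c}) :=
    hfub.preimage_isClosed_of_isClosed isClosed_Icc isClosed_singleton
  have hSane : (Icc u b' ∩ f ⁻¹' {c}).Nonempty := ⟨u, ⟨⟨le_rfl, hb'mem.1.1⟩, hfu⟩⟩
  have hSabdd : BddAbove (Icc u b' ∩ f ⁻¹' {c}) := ⟨b', fun x hx => hx.1.2⟩
  set a' := sSup (Icc u b' ∩ f ⁻¹' {c}) with ha'def
  have ha'mem : a' ∈ Icc u b' ∩ f ⁻¹' {c} := hSac.csSup_mem hSane hSabdd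
  have hfa' : f a' = c := ha'mem.2
  have ha'b' : a' ≤ b' := ha'mem.1.2
  have hua' : u ≤ a' := ha'mem.1.1
  have hb'v : b' ≤ v := hb'mem.1.2
  have hsub2 : Icc a' b' ⊆ Icc a b :=
    Icc_subset_Icc (le_trans hu.1 hua') (le_trans hb'v hv.2)
  have hfab' : ContinuousOn f (Icc a' b') := hf.mono hsub2
  refine ⟨a', b', ha'b', hsub2, ?_⟩
  apply Set.Subset.antisymm
  · rintro y ⟨x, hx, rfl⟩
    constructor
    · by_contra hlt
      push_neg at hlt
      obtain ⟨z, hz, hfz⟩ := intermediate_value_Icc (hx.2 : x ≤ b')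
        (hfab'.mono (Icc_subset_Icc hx.1 le_rfl))
        (⟨le_of_lt hlt, hfb' ▸ hcd⟩ : c ∈ Icc (f x) (f b'))
      have hzSa : z ∈ Icc u b' ∩ f ⁻¹' {c} :=
        ⟨⟨le_trans hua' (le_trans hx.1 hz.1), hz.2⟩, hfz⟩
      have hza : z ≤ a' := le_csSup hSabdd hzSa
      have hxz : x = z := le_antisymm hz.1 (le_trans hza hx.1)
      rw [← hxz] at hfz
      linarith [hfz]
    · by_contra hlt
      push_neg at hlt
      obtain ⟨z, hz, hfz⟩ := intermediate_value_Icc (hx.1 : a' ≤ x)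
        (hfab'.mono (Icc_subset_Icc le_rfl hx.2))
        (⟨hfa' ▸ hcd, le_of_lt hlt⟩ : d ∈ Icc (f a') (f x))
      have hzSb : z ∈ Icc u v ∩ f ⁻¹' {d} :=
        ⟨⟨le_trans hua' hz.1, le_trans hz.2 (le_trans hx.2 hb'v)⟩, hfz⟩
      have hbz : b' ≤ z := csInf_le hSbbdd hzSb
      have hxz : x = z := le_antisymm (le_trans hx.2 hbz) hz.2
      rw [← hxz] at hfz
      linarith [hfz]
  · have h := intermediate_value_Icc ha'b' hfab'
    rw [hfa', hfb'] at h
    exact h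


lemma cover {f : ℝ → ℝ} {a b c d : ℝ} (hab : a ≤ b) (hf : ContinuousOn f (Icc a b))
    (hcd : c ≤ d) (hsub : Icc c d ⊆ f '' Icc a b) :
    ∃ a' b', a' ≤ b' ∧ Icc a' b' ⊆ Icc a b ∧ f '' Icc a' b' = Icc c d := by
  obtain ⟨u, hu, hfu⟩ := hsub (left_mem_Icc.mpr hcd)
  obtain ⟨v, hv, hfv⟩ := hsub (right_mem_Icc.mpr hcd)
  rcases le_total u v with huv | hvu
  · exact cover_core hf hcd hu hv huv hfu hfv
  · -- apply the core lemma to the reflected function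
    set ρ : ℝ → ℝ := fun y => a + b - y with hρ
    have hρmaps : ∀ y ∈ Icc a b, ρ y ∈ Icc a b := by
      intro y hy
      exact ⟨by simp only [hρ]; linarith [hy.2], by simp only [hρ]; linarith [hy.1]⟩
    have hFcont : ContinuousOn (f ∘ ρ) (Icc a b) := by
      apply hf.comp ((continuous_const.sub continuous_id).continuousOn) hρmaps
    have hu' : ρ u ∈ Icc a b := hρmaps u hu
    have hv' : ρ v ∈ Icc a b := hρmaps v hv
    have huv' : ρ u ≤ ρ v := by simp only [hρ]; linarith
    have hFu : (f ∘ ρ) (ρ u) = c := by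
      simp only [Function.comp, hρ]
      rw [show a + b - (a + b - u) = u by ring, hfu]
    have hFv : (f ∘ ρ) (ρ v) = d := by
      simp only [Function.comp, hρ]
      rw [show a + b - (a + b - v) = v by ring, hfv]
    obtain ⟨a', b', h'ab, h'sub, h'img⟩ := cover_core hFcont hcd hu' hv' huv' hFu hFv
    have ha' : a ≤ a' := (h'sub (left_mem_Icc.mpr h'ab)).1
    have hb' : b' ≤ b := (h'sub (right_mem_Icc.mpr h'ab)).2
    refine ⟨a + b - b', a + b - a', by linarith, ?_, ?_⟩
    · apply Icc_subset_Icc <;> linarith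
    · have : f '' Icc (a + b - b') (a + b - a') = (f ∘ ρ) '' Icc a' b' := by
        rw [Set.image_comp]
        congr 1
        rw [show ρ '' Icc a' b' = (fun y => (a+b) - y) '' Icc a' b' from rfl,
          Set.image_const_sub_Icc]
      rw [this, h'img]

lemma fixpt {g : ℝ → ℝ} {a b : ℝ} (hab : a ≤ b) (hg : ContinuousOn g (Icc a b))
    (hsub : Icc a b ⊆ g '' Icc a b) : ∃ z ∈ Icc a b, g z = z := by
  obtain ⟨u, hu, hgu⟩ := hsub (left_mem_Icc.mpr hab)
  obtain ⟨v, hv, hgv⟩ := hsub (right_mem_Icc.mpr hab)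
  have hcsub : ∀ x y : ℝ, x ∈ Icc a b → y ∈ Icc a b → x ≤ y →
      ContinuousOn (fun w => g w - w) (Icc x y) :=
    fun x y hx hy _ => ((hg.mono (Icc_subset_Icc hx.1 hy.2)).sub continuousOn_id)
  rcases le_total u v with huv | hvu
  · obtain ⟨z, hz, hz0⟩ := intermediate_value_Icc huv (hcsub u v hu hv huv)
      (⟨by rw [hgu]; linarith [hu.1], by rw [hgv]; linarith [hv.2]⟩ :
        (0:ℝ) ∈ Icc (g u - u) (g v - v))
    exact ⟨z, ⟨le_trans hu.1 hz.1, le_trans hz.2 hv.2⟩, by linarith [hz0, sub_eq_zero.mp hz0]⟩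
  · obtain ⟨z, hz, hz0⟩ := intermediate_value_Icc' hvu (hcsub v u hv hu hvu)
      (⟨by rw [hgu]; linarith [hu.1], by rw [hgv]; linarith [hv.2]⟩ :
        (0:ℝ) ∈ Icc (g u - u) (g v - v))
    exact ⟨z, ⟨le_trans hv.1 hz.1, le_trans hz.2 hu.2⟩, by linarith [sub_eq_zero.mp hz0]⟩

lemma tri {f : ℝ → ℝ} (hA : ∀ y ∈ Icc (0:ℝ) 1, f y = -y)
    (hB : ∀ y ∈ Icc (-1:ℝ) 0, f y = Tm (-y))
    {z : ℝ} (hz : z ∈ Icc (-1:ℝ) 1) (h3 : f^[3] z = z) : z = 0 := by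
  have hf0 : f 0 = 0 := by
    have := hA 0 ⟨le_rfl, by norm_num⟩
    simpa using this
  have h3' : f (f (f z)) = z := by
    have : f^[3] z = f (f (f z)) := by
      rw [show (3:ℕ) = 1+1+1 from rfl, Function.iterate_add_apply,
        Function.iterate_add_apply]
      rfl
    rw [← this, h3]
  by_contra hz0
  rcases le_or_gt 0 z with hpos | hneg
  · have hzpos : 0 < z := lt_of_le_of_ne hpos (Ne.symm hz0)
    have hfz : f z = -z := hA z ⟨hpos, hz.2⟩
    have hffz : f (f z) = Tm z := by
      rw [hfz, hB (-z) ⟨by linarith [hz.2], by linarith⟩, neg_neg]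
    have hT := Tm_mem (⟨hpos, hz.2⟩ : z ∈ Icc (0:ℝ) 1)
    rcases eq_or_lt_of_le hT.1 with hT0 | hT0
    · rw [hffz, ← hT0, hf0] at h3'
      exact hz0 h3'.symm
    · have : f (Tm z) = -(Tm z) := hA _ hT
      rw [hffz, this] at h3'
      linarith
  · have hfz : f z = Tm (-z) := hB z ⟨hz.1, le_of_lt hneg⟩
    have hT := Tm_mem (⟨by linarith, by linarith [hz.1]⟩ : -z ∈ Icc (0:ℝ) 1)
    rcases eq_or_lt_of_le hT.1 with hT0 | hT0
    · rw [hfz, ← hT0, hf0, hf0] at h3'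
      exact hz0 h3'.symm
    · have h2 : f (f z) = -(Tm (-z)) := by rw [hfz]; exact hA _ hT
      have h3'' : f (f (f z)) = Tm (Tm (-z)) := by
        rw [h2, hB (-(Tm (-z))) ⟨by linarith [hT.2], by linarith⟩, neg_neg]
      have := (Tm_mem hT).1
      rw [h3''] at h3'
      linarith [this, h3']

lemma fcont {f : ℝ → ℝ}
    (h1 : ∀ x ∈ Set.Icc (-1 : ℝ) (-1/2), f x = 2 * x + 2)
    (h2 : ∀ x ∈ Set.Icc (-1/2 : ℝ) 0, f x = -2 * x)
    (h3 : ∀ x ∈ Set.Icc (0 : ℝ) 1, f x = -x) :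
    ContinuousOn f (Icc (-1:ℝ) 1) := by
  set g : ℝ → ℝ := fun x => if x ≤ -1/2 then 2*x+2 else if x ≤ 0 then -2*x else -x with hg
  have hinner : Continuous (fun x : ℝ => if x ≤ 0 then -2*x else -x) := by
    apply Continuous.if_le (by continuity) (by continuity) continuous_id continuous_const
    intro x hx
    simp only [id] at hx
    rw [hx]
    ring
  have hgc : Continuous g := by
    apply Continuous.if_le (by continuity) hinner continuous_id continuous_const
    intro x hx
    simp only [id] at hx
    rw [hx]
    norm_num
  apply hgc.continuousOn.congr
  intro x hx
  show f x = g x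
  simp only [hg]
  by_cases hx1 : x ≤ -1/2
  · rw [if_pos hx1, h1 x ⟨hx.1, hx1⟩]
  · push_neg at hx1
    rw [if_neg (not_le.mpr hx1)]
    by_cases hx2 : x ≤ 0
    · rw [if_pos hx2, h2 x ⟨le_of_lt hx1, hx2⟩]
    · push_neg at hx2
      rw [if_neg (not_le.mpr hx2), h3 x ⟨le_of_lt hx2, hx.2⟩]

lemma noturb {f : ℝ → ℝ} (hA : ∀ y ∈ Icc (0:ℝ) 1, f y = -y)
    (hB : ∀ y ∈ Icc (-1:ℝ) 0, f y = Tm (-y))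
    (hc : ContinuousOn f (Icc (-1:ℝ) 1)) : ¬ Turbulent f (Icc (-1) 1) := by
  rintro ⟨p, q, r, s, hpq, hrs, hJ0, hJ1, hsing, hcov⟩
  have hf0 : f 0 = 0 := by simpa using hA 0 ⟨le_rfl, by norm_num⟩
  have hcov00 : Icc p q ⊆ f '' Icc p q := fun x hx => (hcov (Or.inl hx)).1
  have hcov10 : Icc r s ⊆ f '' Icc p q := fun x hx => (hcov (Or.inr hx)).1
  have hcov01 : Icc p q ⊆ f '' Icc r s := fun x hx => (hcov (Or.inl hx)).2
  have hcov11 : Icc r s ⊆ f '' Icc r s := fun x hx => (hcov (Or.inr hx)).2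
  have hcJ0 : ContinuousOn f (Icc p q) := hc.mono hJ0
  have hcJ1 : ContinuousOn f (Icc r s) := hc.mono hJ1
  -- build the itinerary intervals
  obtain ⟨a2, b2, h2ab, h2sub, h2img⟩ := cover (le_of_lt hpq) hcJ0 (le_of_lt hrs) hcov10
  obtain ⟨a1, b1, h1ab, h1sub, h1img⟩ := cover (le_of_lt hpq) hcJ0 h2ab
    (fun x hx => hcov00 (h2sub hx))
  obtain ⟨a0, b0, h0ab, h0sub, h0img⟩ := cover (le_of_lt hrs) hcJ1 h1ab
    (fun x hx => hcov01 (h1sub hx))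
  have hc0 : ContinuousOn f (Icc a0 b0) := hcJ1.mono h0sub
  have hc1 : ContinuousOn f (Icc a1 b1) := hcJ0.mono h1sub
  have hc2 : ContinuousOn f (Icc a2 b2) := hcJ0.mono h2sub
  have hmaps0 : MapsTo f (Icc a0 b0) (Icc a1 b1) := fun x hx =>
    h0img ▸ mem_image_of_mem f hx
  have hmaps1 : MapsTo f (Icc a1 b1) (Icc a2 b2) := fun x hx =>
    h1img ▸ mem_image_of_mem f hx
  have hcont3 : ContinuousOn (f^[3]) (Icc a0 b0) := by
    have : ContinuousOn (f ∘ f ∘ f) (Icc a0 b0) :=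
      ContinuousOn.comp hc2 (ContinuousOn.comp hc1 hc0 hmaps0) (hmaps1.comp hmaps0)
    have he : f^[3] = f ∘ f ∘ f := by
      funext w
      rw [show (3:ℕ) = 1+1+1 from rfl, Function.iterate_add_apply,
        Function.iterate_add_apply]
      rfl
    rw [he]
    exact this
  have himg3 : f^[3] '' Icc a0 b0 = Icc r s := by
    have he : f^[3] '' Icc a0 b0 = f '' (f '' (f '' Icc a0 b0)) := by
      have : f^[3] = f ∘ f ∘ f := by
        funext w
        rw [show (3:ℕ) = 1+1+1 from rfl, Function.iterate_add_apply,
          Function.iterate_add_apply]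
        rfl
      rw [this, Set.image_comp, Set.image_comp]
    rw [he, h0img, h1img, h2img]
  have hsub3 : Icc a0 b0 ⊆ f^[3] '' Icc a0 b0 := by rw [himg3]; exact h0sub
  obtain ⟨z, hz0, hz3⟩ := fixpt h0ab hcont3 hsub3
  have hzJ1 : z ∈ Icc r s := h0sub hz0
  have hz00 : z = 0 := tri hA hB (hJ1 hzJ1) hz3
  have h0J1 : (0:ℝ) ∈ Icc r s := hz00 ▸ hzJ1
  have h0J0 : (0:ℝ) ∈ Icc p q := by
    have hfz : f z ∈ Icc a1 b1 := h0img ▸ mem_image_of_mem f hz0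
    have := h1sub hfz
    rw [hz00, hf0] at this
    exact this
  -- final contradiction from the geometry around 0
  have hp0 : p ≤ 0 := h0J0.1
  have hq0 : 0 ≤ q := h0J0.2
  have hr0 : r ≤ 0 := h0J1.1
  have hs0 : 0 ≤ s := h0J1.2
  -- not both q > 0 and s > 0
  have hnotboth : ¬ (0 < q ∧ 0 < s) := by
    rintro ⟨hq, hs⟩
    set m := min q s with hm
    have hm0 : 0 < m := lt_min hq hs
    have hmem : ∀ x : ℝ, 0 ≤ x → x ≤ m → x ∈ Icc p q ∩ Icc r s := by
      intro x hx1 hx2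
      exact ⟨⟨le_trans hp0 hx1, le_trans hx2 (min_le_left _ _)⟩,
        ⟨le_trans hr0 hx1, le_trans hx2 (min_le_right _ _)⟩⟩
    have := hsing (hmem m (le_of_lt hm0) le_rfl) (hmem (m/2) (by linarith) (by linarith))
    linarith
  -- not both q = 0 and s = 0 (i.e. both intervals on the left)
  have hnotleft : ¬ (q ≤ 0 ∧ s ≤ 0) := by
    rintro ⟨hq, hs⟩
    set m := max p r with hm
    have hm0 : m < 0 := max_lt (by linarith) (by linarith)
    have hmem : ∀ x : ℝ, m ≤ x → x ≤ 0 → x ∈ Icc p q ∩ Icc r s := by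
      intro x hx1 hx2
      exact ⟨⟨le_trans (le_max_left _ _) hx1, le_trans hx2 (by linarith)⟩,
        ⟨le_trans (le_max_right _ _) hx1, le_trans hx2 (by linarith)⟩⟩
    have := hsing (hmem m le_rfl (le_of_lt hm0)) (hmem (m/2) (by linarith) (by linarith))
    linarith
  -- so exactly one of the intervals sticks out to the right of 0
  have key : ∀ c1 c2 : ℝ, c1 = 0 → 0 < c2 → c2 ≤ 1 → Icc c1 c2 ⊆ f '' Icc c1 c2 → False := by
    intro c1 c2 hc1 hc2 hc2' hcv
    obtain ⟨w, hw, hfw⟩ := hcv (right_mem_Icc.mpr (by rw [hc1]; linarith))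
    rw [hc1] at hw
    have : f w = -w := hA w ⟨hw.1, le_trans hw.2 hc2'⟩
    rw [hfw] at this
    linarith [hw.1]
  rcases le_or_gt q 0 with hq | hq
  · -- J0 on the left, so s > 0 and r = 0
    have hq00 : q = 0 := le_antisymm hq hq0
    have hs : 0 < s := by
      rcases lt_or_ge 0 s with h | h
      · exact h
      · exact absurd ⟨hq, h⟩ hnotleft
    -- r must be 0: otherwise the intersection contains an interval left of 0
    have hr00 : r = 0 := by
      by_contra hr
      have hrneg : r < 0 := lt_of_le_of_ne hr0 hr
      set m := max p r with hm
      have hm0 : m < 0 := max_lt (by linarith) hrneg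
      have hmem : ∀ x : ℝ, m ≤ x → x ≤ 0 → x ∈ Icc p q ∩ Icc r s := by
        intro x hx1 hx2
        exact ⟨⟨le_trans (le_max_left _ _) hx1, by rw [hq00]; exact hx2⟩,
          ⟨le_trans (le_max_right _ _) hx1, le_trans hx2 (by linarith)⟩⟩
      have := hsing (hmem m le_rfl (le_of_lt hm0)) (hmem (m/2) (by linarith) (by linarith))
      linarith
    exact key r s hr00 hs (hJ1 (right_mem_Icc.mpr (le_of_lt hrs))).2 hcov11
  · -- q > 0, so s ≤ 0 (by hnotboth), hence s = 0, and p = 0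
    have hs : s ≤ 0 := by
      by_contra h
      exact hnotboth ⟨hq, lt_of_not_ge h⟩
    have hs00 : s = 0 := le_antisymm hs hs0
    have hp00 : p = 0 := by
      by_contra hp
      have hpneg : p < 0 := lt_of_le_of_ne hp0 hp
      set m := max p r with hm
      have hm0 : m < 0 := max_lt hpneg (by linarith)
      have hmem : ∀ x : ℝ, m ≤ x → x ≤ 0 → x ∈ Icc p q ∩ Icc r s := by
        intro x hx1 hx2
        exact ⟨⟨le_trans (le_max_left _ _) hx1, le_trans hx2 (by linarith)⟩,
          ⟨le_trans (le_max_right _ _) hx1, by rw [hs00]; exact hx2⟩⟩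
      have := hsing (hmem m le_rfl (le_of_lt hm0)) (hmem (m/2) (by linarith) (by linarith))
      linarith
    exact key p q hp00 hq ((hJ0 (right_mem_Icc.mpr (le_of_lt hpq))).2) hcov00

/-! ### frequently-lemmas for pairs of scrambled points -/

-- the probe position: mrk k + 1
lemma probe_big (t : ℕ → Bool) (k : ℕ) : 3/4 ≤ Tm^[mrk k + 1] (xv t) := by
  rw [ev_orbit]
  exact E1' t k

lemma mrk_ge (k : ℕ) : k ≤ mrk k := by
  have := st_ge k
  unfold mrk
  omega

section Pairs

variable {f : ℝ → ℝ}
variable (hA : ∀ y ∈ Icc (0:ℝ) 1, f y = -y) (hB : ∀ y ∈ Icc (-1:ℝ) 0, f y = Tm (-y))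
include hA hB

/-- same parity, different shift -/
lemma pair_offset (s t : ℕ → Bool) {a b : ℕ} (hab : a < b) (hpar : a % 2 = b % 2) :
    ∀ N, ∃ n ≥ N, 1/2 ≤ |f^[n+a] (xv s) - f^[n+b] (xv t)| := by
  intro N
  set k := N + a + b + 2 with hk
  have hmge := mrk_ge k
  set K := mrk k + 1 with hK
  set d := (b - a)/2 with hd
  have hd1 : 1 ≤ d := by omega
  have hba : b = a + 2*d := by omega
  set n := 2*K - a with hn
  have hna : n + a = 2*K := by omega
  have hnb : n + b = 2*(K + d) := by omega
  refine ⟨n, by omega, ?_⟩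
  have hs1 : f^[n+a] (xv s) = Tm^[K] (xv s) := by
    rw [FITeven hA hB (xv_mem s) ⟨K, by omega⟩, show (n+a)/2 = K by omega]
  have ht1 : f^[n+b] (xv t) = Tm^[K+d] (xv t) := by
    rw [FITeven hA hB (xv_mem t) ⟨K+d, by omega⟩, show (n+b)/2 = K+d by omega]
  have hbig := probe_big s k
  have hsmall : Tm^[K+d] (xv t) ≤ 1/4 := by
    rw [ev_orbit, show K + d = mrk k + 1 + d by omega]
    have h1 := E2 t (k := k) (r := d) hd1 (by have hZ : Z k = k + 10 := rfl; omega)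
    have h2 : ((1:ℝ)/2)^(Z k - d) ≤ (1/2)^2 := half_pow_le (by have hZ : Z k = k + 10 := rfl; omega)
    norm_num at h2
    linarith
  have hnn := (Tm_iter_mem (xv_mem t) (K+d)).1
  rw [hs1, ht1, abs_of_nonneg (by linarith)]
  linarith

/-- different parity -/
lemma pair_parity (s t : ℕ → Bool) {a b : ℕ} (hpar : a % 2 ≠ b % 2) :
    ∀ N, ∃ n ≥ N, 1/2 ≤ |f^[n+a] (xv s) - f^[n+b] (xv t)| := by
  intro N
  set k := N + a + b + 2 with hk
  have hmge := mrk_ge k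
  set K := mrk k + 1 with hK
  set n := 2*K - a with hn
  have hna : n + a = 2*K := by omega
  refine ⟨n, by omega, ?_⟩
  have hs1 : f^[n+a] (xv s) = Tm^[K] (xv s) := by
    rw [FITeven hA hB (xv_mem s) ⟨K, by omega⟩, show (n+a)/2 = K by omega]
  have ht1 : f^[n+b] (xv t) = -(Tm^[(n+b)/2] (xv t)) := by
    apply FITodd hA hB (xv_mem t)
    rw [Nat.even_iff]
    omega
  have hbig := probe_big s k
  have hnn := (Tm_iter_mem (xv_mem t) ((n+b)/2)).1
  rw [hs1, ht1, abs_of_nonneg (by linarith)]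
  linarith

/-- same shift, different parameters -/
lemma pair_enc {s t : ℕ → Bool} {j : ℕ} (hj : s j ≠ t j) (a : ℕ) :
    ∀ N, ∃ n ≥ N, 1/2 ≤ |f^[n+a] (xv s) - f^[n+a] (xv t)| := by
  intro N
  set k := N + a + j + 2 with hk
  have hstk := st_ge k
  set K := st k + 3*j + 1 with hK
  set n := 2*K - a with hn
  have hna : n + a = 2*K := by omega
  refine ⟨n, by omega, ?_⟩
  have hs1 : f^[n+a] (xv s) = Tm^[K] (xv s) := by
    rw [FITeven hA hB (xv_mem s) ⟨K, by omega⟩, show (n+a)/2 = K by omega]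
  have ht1 : f^[n+a] (xv t) = Tm^[K] (xv t) := by
    rw [FITeven hA hB (xv_mem t) ⟨K, by omega⟩, show (n+a)/2 = K by omega]
  rw [hs1, ht1, ev_orbit, ev_orbit]
  exact ENCdiff hj (by omega)

/-- both orbits get simultaneously small -/
lemma pair_small (s t : ℕ → Bool) (a b : ℕ) :
    ∀ ε > (0:ℝ), ∀ N, ∃ n ≥ N, |f^[n+a] (xv s) - f^[n+b] (xv t)| ≤ ε := by
  intro ε hε N
  obtain ⟨E, hE⟩ := exists_pow_lt_of_lt_one (by linarith : (0:ℝ) < ε/2) (by norm_num : (1:ℝ)/2 < 1)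
  set k := N + 2*(a+b) + E + 2 with hk
  have hmge := mrk_ge k
  set c := mrk k + 1 + (1 + a + b) with hc
  set n := 2*c - a with hn
  have hna : n + a = 2*c := by omega
  refine ⟨n, by omega, ?_⟩
  set c' := (n + b)/2 with hc'
  have hc'low : mrk k + 1 + 1 ≤ c' := by omega
  have hc'high : c' ≤ mrk k + 1 + (1 + a + 2*b) := by omega
  have habs1 : |f^[n+a] (xv s)| = Tm^[c] (xv s) := by
    rw [FABS hA hB (xv_mem s), show (n+a)/2 = c by omega]
  have habs2 : |f^[n+b] (xv t)| = Tm^[c'] (xv t) := FABS hA hB (xv_mem t) (n+b)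
  have hsm1 : Tm^[c] (xv s) ≤ ε/2 := by
    rw [ev_orbit, hc]
    have h1 := E2 s (k := k) (r := 1 + a + b) (by omega) (by have hZ : Z k = k + 10 := rfl; omega)
    have h2 : ((1:ℝ)/2)^(Z k - (1+a+b)) ≤ (1/2)^E :=
      half_pow_le (by have hZ : Z k = k + 10 := rfl; omega)
    linarith
  have hsm2 : Tm^[c'] (xv t) ≤ ε/2 := by
    rw [ev_orbit, show c' = mrk k + 1 + (c' - (mrk k + 1)) by omega]
    have h1 := E2 t (k := k) (r := c' - (mrk k + 1)) (by omega) (by have hZ : Z k = k + 10 := rfl; omega)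
    have h2 : ((1:ℝ)/2)^(Z k - (c' - (mrk k+1))) ≤ (1/2)^E :=
      half_pow_le (by have hZ : Z k = k + 10 := rfl; omega)
    linarith
  have hb1 : |f^[n+a] (xv s)| ≤ ε/2 := by rw [habs1]; exact hsm1
  have hb2 : |f^[n+b] (xv t)| ≤ ε/2 := by rw [habs2]; exact hsm2
  calc |f^[n+a] (xv s) - f^[n+b] (xv t)| ≤ |f^[n+a] (xv s)| + |f^[n+b] (xv t)| :=
        abs_sub _ _
  _ ≤ ε/2 + ε/2 := add_le_add hb1 hb2
  _ = ε := by ring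

end Pairs

/-! ### machinery for periodic points -/

section Periodic

variable {f : ℝ → ℝ}
variable (hA : ∀ y ∈ Icc (0:ℝ) 1, f y = -y) (hB : ∀ y ∈ Icc (-1:ℝ) 0, f y = Tm (-y))
include hA hB

lemma FITif {y : ℝ} (hy : y ∈ Icc (0:ℝ) 1) (n : ℕ) :
    f^[n] y = if Even n then Tm^[n/2] y else -(Tm^[n/2] y) := by
  by_cases hn : Even n
  · rw [if_pos hn]; exact FITeven hA hB hy hn
  · rw [if_neg hn]; exact FITodd hA hB hy hn

lemma Tper {q : ℝ} (hq : q ∈ Icc (0:ℝ) 1) {m : ℕ} (hqm : f^[m] q = q) :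
    Tm^[m] q = q := by
  have h1 := (FIT2 hA hB hq m).1
  have h2 : f^[2*m] q = q := by
    rw [show 2*m = m + m by omega, Function.iterate_add_apply, hqm, hqm]
  rw [← h1, h2]

lemma qcon {p : ℝ} {m : ℕ} (hp : p ∈ Icc (-1:ℝ) 1) (hm : 0 < m)
    (hmp : f^[m] p = p) (hp0 : p ≠ 0) :
    ∃ q v : ℝ, q ∈ Icc (0:ℝ) 1 ∧ Tm^[m] q = q ∧ 0 < v ∧ (∀ i, v ≤ Tm^[i] q) ∧
      ((0 < p ∧ q = p) ∨ (p < 0 ∧ q = f p)) := by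
  have hf0 : f 0 = 0 := by simpa using hA 0 ⟨le_rfl, by norm_num⟩
  have build : ∀ q : ℝ, q ∈ Icc (0:ℝ) 1 → q ≠ 0 → f^[m] q = q →
      ∃ v : ℝ, Tm^[m] q = q ∧ 0 < v ∧ (∀ i, v ≤ Tm^[i] q) := by
    intro q hq01 hq0 hqm
    have hTper : Tm^[m] q = q := Tper hA hB hq01 hqm
    have hpos : ∀ i, 0 < Tm^[i] q := Tm_iter_pos hq01 hm hTper hq0
    have hne : (Finset.range m).Nonempty := ⟨0, Finset.mem_range.mpr hm⟩
    refine ⟨Finset.inf' (Finset.range m) hne (fun i => Tm^[i] q), hTper, ?_, ?_⟩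
    · rw [Finset.lt_inf'_iff]
      exact fun i _ => hpos i
    · intro i
      have hmod : Tm^[i % m] q = Tm^[i] q :=
        Function.IsPeriodicPt.iterate_mod_apply (hTper : Function.IsPeriodicPt Tm m q) i
      rw [← hmod]
      exact Finset.inf'_le _ (Finset.mem_range.mpr (Nat.mod_lt i hm))
  rcases lt_or_gt_of_ne hp0 with hneg | hpos
  · -- p < 0 : use q = f p
    set q := f p with hq
    have hq01 : q ∈ Icc (0:ℝ) 1 := by
      rw [hq, hB p ⟨hp.1, le_of_lt hneg⟩]
      exact Tm_mem ⟨by linarith, by linarith [hp.1]⟩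
    have hq0 : q ≠ 0 := by
      intro h
      apply hp0
      have h2 : f^[m] p = f^[m-1] (f p) := by
        conv_lhs => rw [show m = (m-1)+1 by omega]
        rw [Function.iterate_succ_apply]
      rw [h2, ← hq, h, Function.iterate_fixed hf0] at hmp
      exact hmp.symm
    have hqm : f^[m] q = q := by
      have h2 : f^[m] (f p) = f (f^[m] p) := by
        rw [← Function.iterate_succ_apply, Function.iterate_succ_apply']
      rw [hq, h2, hmp]
    obtain ⟨v, h1, h2, h3⟩ := build q hq01 hq0 hqm
    exact ⟨q, v, hq01, h1, h2, h3, Or.inr ⟨hneg, rfl⟩⟩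
  · set q := p with hq
    have hq01 : q ∈ Icc (0:ℝ) 1 := ⟨le_of_lt hpos, hp.2⟩
    obtain ⟨v, h1, h2, h3⟩ := build q hq01 hp0 hmp
    exact ⟨q, v, hq01, h1, h2, h3, Or.inl ⟨hpos, rfl⟩⟩

end Periodic

/-- aligned-phase comparison against a periodic orbit, with shift `e` -/
lemma per_same (t : ℕ → Bool) (e : ℕ) {q v : ℝ} {m : ℕ} (hq : q ∈ Icc (0:ℝ) 1)
    (hm : 0 < m) (hper : Tm^[m] q = q) (hv : 0 < v) (hvle : ∀ i, v ≤ Tm^[i] q) :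
    ∀ N, ∃ K, K ≥ N ∧ K ≥ e ∧ 1/4 ≤ |Tm^[K] (xv t) - Tm^[K-e] q| := by
  intro N
  obtain ⟨qe, hqe1, hqe2⟩ := shift_periodic hm hper e
  have hqe01 : qe ∈ Icc (0:ℝ) 1 := by
    have := Tm_iter_mem hq (0 + (m*(e+1) - e))
    rw [← hqe1 0] at this
    simpa using this
  have hvle' : ∀ i, v ≤ Tm^[i] qe := fun i => by rw [hqe1 i]; exact hvle _
  obtain ⟨K, hK, hK4⟩ := PC t hqe01 hv hvle' (max N e)
  refine ⟨K, le_trans (le_max_left _ _) hK, le_trans (le_max_right _ _) hK, ?_⟩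
  rw [← hqe2 K (le_trans (le_max_right _ _) hK)]
  exact hK4

section Probe2

variable {f : ℝ → ℝ}
variable (hA : ∀ y ∈ Icc (0:ℝ) 1, f y = -y) (hB : ∀ y ∈ Icc (-1:ℝ) 0, f y = Tm (-y))
include hA hB

/-- the orbit of a scrambled point is frequently near `1`, at times of
controlled parity. -/
lemma per_opposite (t : ℕ → Bool) (a : ℕ) :
    ∀ N, ∃ n, n ≥ N ∧ 3/4 ≤ f^[n+a] (xv t) ∧ n % 2 = a % 2 ∧ 1 ≤ n := by
  intro N
  set k := N + a + 2 with hk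
  have hmge := mrk_ge k
  set K := mrk k + 1 with hK
  set n := 2*K - a with hn
  have hna : n + a = 2*K := by omega
  refine ⟨n, by omega, ?_, by omega, by omega⟩
  have hs1 : f^[n+a] (xv t) = Tm^[K] (xv t) := by
    rw [FITeven hA hB (xv_mem t) ⟨K, by omega⟩, show (n+a)/2 = K by omega]
  rw [hs1]
  exact probe_big t k

end Probe2

/-! ### final assembly of the scrambled set -/

theorem scrambled_main {f : ℝ → ℝ}
    (hA : ∀ y ∈ Icc (0:ℝ) 1, f y = -y) (hB : ∀ y ∈ Icc (-1:ℝ) 0, f y = Tm (-y)) :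
    ∃ S : Set ℝ, ¬ S.Countable ∧ ScrambledSet f (Set.Icc (-1) 1) (1/2) S ∧
      Set.MapsTo f S S := by
  classical
  have hf0 : f 0 = 0 := by simpa using hA 0 ⟨le_rfl, by norm_num⟩
  set S : Set ℝ := {y | ∃ t : ℕ → Bool, ∃ a : ℕ, y = f^[a] (xv t)} with hSdef
  have hxv11 : ∀ t : ℕ → Bool, xv t ∈ Icc (-1:ℝ) 1 := fun t =>
    ⟨by linarith [(xv_mem t).1], (xv_mem t).2⟩
  have hSsub : S ⊆ Icc (-1:ℝ) 1 := by
    rintro y ⟨t, a, rfl⟩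
    exact fiter_mem hA hB (hxv11 t) a
  have hBnd : ∀ u v : ℝ, u ∈ Icc (-1:ℝ) 1 → v ∈ Icc (-1:ℝ) 1 →
      ∀ n : ℕ, |f^[n] u - f^[n] v| ≤ 2 := by
    intro u v hu hv n
    have h1 := fiter_mem hA hB hu n
    have h2 := fiter_mem hA hB hv n
    calc |f^[n] u - f^[n] v| ≤ |f^[n] u| + |f^[n] v| := abs_sub _ _
    _ ≤ 1 + 1 := add_le_add (abs_le.mpr ⟨h1.1, h1.2⟩) (abs_le.mpr ⟨h2.1, h2.2⟩)
    _ = 2 := by norm_num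
  refine ⟨S, ?_, ⟨hSsub, ?_, ?_⟩, ?_⟩
  · -- S is uncountable
    intro hcnt
    have hinj : Function.Injective xv := by
      intro s t hst
      by_contra hne
      obtain ⟨j, hj⟩ := Function.ne_iff.mp hne
      obtain ⟨n, _, hn⟩ := pair_enc hA hB hj 0 0
      rw [hst] at hn
      simp at hn
      linarith
    have hpre : xv ⁻¹' S = Set.univ := by
      apply Set.eq_univ_of_forall
      intro t
      exact ⟨t, 0, rfl⟩
    have hcu := Set.Countable.preimage hcnt hinj
    rw [hpre, Set.countable_univ_iff] at hcu
    have hc2 : Countable (Set ℕ) :=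
      (Equiv.arrowCongr (Equiv.refl ℕ) Equiv.propEquivBool).countable_iff.mpr hcu
    obtain ⟨g, hg⟩ := (countable_iff_exists_injective (Set ℕ)).mp hc2
    exact Function.cantor_injective g hg
  · -- pair condition
    rintro x ⟨s, a, rfl⟩ y ⟨t, b, rfl⟩ hxy
    have hrw : ∀ n : ℕ, |f^[n] (f^[a] (xv s)) - f^[n] (f^[b] (xv t))|
        = |f^[n+a] (xv s) - f^[n+b] (xv t)| := by
      intro n
      rw [← Function.iterate_add_apply, ← Function.iterate_add_apply]
    constructor
    · apply freq_le_limsupD (C := 2)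
        (fun n => hBnd _ _ (hSsub ⟨s, a, rfl⟩) (hSsub ⟨t, b, rfl⟩) n)
      intro N
      have key : ∃ n ≥ N, 1/2 ≤ |f^[n+a] (xv s) - f^[n+b] (xv t)| := by
        by_cases hpar : a % 2 = b % 2
        · rcases Nat.lt_trichotomy a b with hlt | heq | hgt
          · exact pair_offset hA hB s t hlt hpar N
          · subst heq
            have hst : s ≠ t := fun h => hxy (by rw [h])
            obtain ⟨j, hj⟩ := Function.ne_iff.mp hst
            exact pair_enc hA hB hj a N
          · obtain ⟨n, h1, h2⟩ := pair_offset hA hB t s hgt hpar.symm N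
            exact ⟨n, h1, by rwa [abs_sub_comm]⟩
        · exact pair_parity hA hB s t hpar N
      obtain ⟨n, h1, h2⟩ := key
      exact ⟨n, h1, by rw [hrw n]; exact h2⟩
    · apply liminfD_zero (C := 2)
        (fun n => hBnd _ _ (hSsub ⟨s, a, rfl⟩) (hSsub ⟨t, b, rfl⟩) n)
      intro ε hε N
      obtain ⟨n, h1, h2⟩ := pair_small hA hB s t a b ε hε N
      exact ⟨n, h1, by rw [hrw n]; exact h2⟩
  · -- periodic points stay far from the scrambled set
    rintro x ⟨t, a, rfl⟩ p hp ⟨m, hm, hmp⟩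
    have hxS : f^[a] (xv t) ∈ Icc (-1:ℝ) 1 := hSsub ⟨t, a, rfl⟩
    have hrw : ∀ n : ℕ, f^[n] (f^[a] (xv t)) = f^[n+a] (xv t) := fun n =>
      (Function.iterate_add_apply f n a _).symm
    have hbnd : ∀ n, |f^[n] (f^[a] (xv t)) - f^[n] p| ≤ 2 := fun n => hBnd _ _ hxS hp n
    have hgoal : ∀ c : ℝ, 1/4 ≤ c →
        (∀ N, ∃ n ≥ N, c ≤ |f^[n] (f^[a] (xv t)) - f^[n] p|) →
        1/2/2 ≤ limsupD f (f^[a] (xv t)) p := by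
      intro c hc hfreq
      have := freq_le_limsupD (C := 2) hbnd hfreq
      linarith
    by_cases hp0 : p = 0
    · subst hp0
      apply hgoal (3/4) (by norm_num)
      intro N
      obtain ⟨n, h1, h2, _, _⟩ := per_opposite hA hB t a N
      refine ⟨n, h1, ?_⟩
      rw [hrw n, Function.iterate_fixed hf0, sub_zero, abs_of_nonneg (by linarith)]
      exact h2
    · obtain ⟨q, v, hq01, hTper, hv, hvle, hcase⟩ := qcon hA hB hp hm hmp hp0
      rcases hcase with ⟨hpos, hqp⟩ | ⟨hneg, hqp⟩
      · -- p > 0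
        have hpmem : p ∈ Icc (0:ℝ) 1 := ⟨le_of_lt hpos, hp.2⟩
        by_cases hae : a % 2 = 0
        · -- aligned phase, shift e = a/2
          apply hgoal (1/4) le_rfl
          intro N
          set e := a/2 with he
          obtain ⟨K, hK1, hK2, hK4⟩ := per_same t e hq01 hm hTper hv hvle (N + a + e + 1)
          set n := 2*K - a with hn
          have hna : n + a = 2*K := by omega
          refine ⟨n, by omega, ?_⟩
          rw [hrw n]
          have hx1 : f^[n+a] (xv t) = Tm^[K] (xv t) := by
            rw [FITeven hA hB (xv_mem t) ⟨K, by omega⟩, show (n+a)/2 = K by omega]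
          have hp1 : f^[n] p = Tm^[K-e] q := by
            rw [FITeven hA hB hpmem ⟨K - e, by omega⟩, show n/2 = K - e by omega, hqp]
          rw [hx1, hp1]
          exact hK4
        · -- opposite phase
          apply hgoal (3/4) (by norm_num)
          intro N
          obtain ⟨n, h1, h2, h3, h4⟩ := per_opposite hA hB t a N
          refine ⟨n, h1, ?_⟩
          rw [hrw n]
          have hodd : ¬ Even n := by rw [Nat.even_iff]; omega
          have hp1 : f^[n] p = -(Tm^[n/2] p) := FITodd hA hB hpmem hodd
          have hTnn := (Tm_iter_mem hpmem (n/2)).1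
          have heq : f^[n+a] (xv t) - f^[n] p = f^[n+a] (xv t) + Tm^[n/2] p := by
            rw [hp1]; ring
          rw [heq, abs_of_nonneg (by linarith)]
          linarith
      · -- p < 0, q = f p
        by_cases hae : a % 2 = 1
        · -- aligned phase, shift e = (a+1)/2
          apply hgoal (1/4) le_rfl
          intro N
          set e := (a+1)/2 with he
          obtain ⟨K, hK1, hK2, hK4⟩ := per_same t e hq01 hm hTper hv hvle (N + a + e + 2)
          set n := 2*K - a with hn
          have hna : n + a = 2*K := by omega
          have hn1 : 1 ≤ n := by omega
          refine ⟨n, by omega, ?_⟩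
          rw [hrw n]
          have hx1 : f^[n+a] (xv t) = Tm^[K] (xv t) := by
            rw [FITeven hA hB (xv_mem t) ⟨K, by omega⟩, show (n+a)/2 = K by omega]
          have hp1 : f^[n] p = Tm^[K-e] q := by
            have hstep : f^[n] p = f^[n-1] (f p) := by
              conv_lhs => rw [show n = (n-1)+1 by omega]
              rw [Function.iterate_succ_apply]
            rw [hstep, ← hqp, FITeven hA hB hq01 ⟨K - e, by omega⟩,
              show (n-1)/2 = K - e by omega]
          rw [hx1, hp1]
          exact hK4
        · -- opposite phase
          apply hgoal (3/4) (by norm_num)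
          intro N
          obtain ⟨n, h1, h2, h3, h4⟩ := per_opposite hA hB t a N
          refine ⟨n, h1, ?_⟩
          rw [hrw n]
          have hstep : f^[n] p = f^[n-1] (f p) := by
            conv_lhs => rw [show n = (n-1)+1 by omega]
            rw [Function.iterate_succ_apply]
          have hodd : ¬ Even (n-1) := by rw [Nat.even_iff]; omega
          have hp1 : f^[n] p = -(Tm^[(n-1)/2] q) := by
            rw [hstep, ← hqp, FITodd hA hB hq01 hodd]
          have hTnn := (Tm_iter_mem hq01 ((n-1)/2)).1
          have heq : f^[n+a] (xv t) - f^[n] p = f^[n+a] (xv t) + Tm^[(n-1)/2] q := by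
            rw [hp1]; ring
          rw [heq, abs_of_nonneg (by linarith)]
          linarith
  · -- invariance
    rintro y ⟨t, a, rfl⟩
    exact ⟨t, a+1, (Function.iterate_succ_apply' f a (xv t)).symm⟩
end NT

/-- Remark 1 of the paper. The map `f : [-1,1] → [-1,1]` given by
`f(x) = 2x + 2` on `[-1, -1/2]`, `f(x) = -2x` on `[-1/2, 0]`, and `f(x) = -x` on
`[0, 1]` is not turbulent, yet it has an uncountable invariant scrambled set. -/
theorem non_turbulent_map_with_invariant_scrambled_set
    (f : ℝ → ℝ)
    (h1 : ∀ x ∈ Set.Icc (-1 : ℝ) (-1/2), f x = 2 * x + 2)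
    (h2 : ∀ x ∈ Set.Icc (-1/2 : ℝ) 0, f x = -2 * x)
    (h3 : ∀ x ∈ Set.Icc (0 : ℝ) 1, f x = -x) :
    ¬ Turbulent f (Set.Icc (-1) 1) ∧
      ∃ δ > 0, ∃ S : Set ℝ, ¬ S.Countable ∧ ScrambledSet f (Set.Icc (-1) 1) δ S ∧
        Set.MapsTo f S S := by
  have hA : ∀ y ∈ Set.Icc (0:ℝ) 1, f y = -y := h3
  have hB : ∀ y ∈ Set.Icc (-1:ℝ) 0, f y = NT.Tm (-y) := by
    intro y hy
    rcases le_total y (-1/2) with h | h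
    · rw [h1 y ⟨hy.1, h⟩, NT.Tm_right (by linarith)]
      ring
    · rw [h2 y ⟨h, hy.2⟩, NT.Tm_left (by linarith)]
      ring
  refine ⟨NT.noturb hA hB (NT.fcont h1 h2 h3), 1/2, by norm_num, ?_⟩
  exact NT.scrambled_main hA hB
end

section
/- Let f : I → I be a continuous map of a compact interval I. If f has a periodic point of odd least period m ≥ 3 and f has no periodic point of odd least period k with 1 < k < m, then f² is strictly turbulent. -/
/-!
Let `b` be the largest point of the given orbit that `f` moves to the right, `c` the next orbit
point, and `z ∈ (b, c)` a fixed point. Since `z` is fixed, `[z, fʲ b]` `f`-covers `[z, fʲ⁺¹ b]`.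
A cycle of interval coverings of odd length `n < m` through two intervals without a common fixed
point produces a point of odd least period dividing `n`, which the hypothesis forbids. Applied to
cycles built from the intervals `[z, fʲ b]`, this shows that the orbit of `b` alternates around `z`
until index `m - 1` or `m - 2`, and it pins down the order of the last few orbit points. That
order yields a point `q` such that `f² q` lies beyond `q`, away from `z`, while `f q` and `f³ q`
lie on the other side of `z`. Two laps of `f²` between `q` and the preimages of `z` then give the
two disjoint intervals.
-/

open Filter Set Function

theorem mem_uIcc_or_mem_uIcc_of_notMem_uIcc {a b x : ℝ} (hx : x ∉ uIcc a b) :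
    b ∈ uIcc a x ∨ a ∈ uIcc x b := by
  simp only [mem_uIcc] at *
  grind

theorem exists_first_eq_right {g : ℝ → ℝ} {u v : ℝ} (huv : u ≤ v)
    (hg : ContinuousOn g (Icc u v)) : ∃ b ∈ Icc u v, g b = g v ∧ ∀ x ∈ Ico u b, g x ≠ g v := by
  have hS : IsCompact (Icc u v ∩ g ⁻¹' {g v}) := isCompact_Icc.of_isClosed_subset
    (hg.preimage_isClosed_of_isClosed isClosed_Icc isClosed_singleton) inter_subset_left
  obtain ⟨b, ⟨hb, hgb⟩, hleast⟩ := hS.exists_isLeast ⟨v, right_mem_Icc.2 huv, rfl⟩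
  exact ⟨b, hb, hgb, fun x hx hgx => (hleast ⟨⟨hx.1, hx.2.le.trans hb.2⟩, hgx⟩).not_gt hx.2⟩

theorem exists_last_eq_left {g : ℝ → ℝ} {u v : ℝ} (huv : u ≤ v)
    (hg : ContinuousOn g (Icc u v)) : ∃ a ∈ Icc u v, g a = g u ∧ ∀ x ∈ Ioc a v, g x ≠ g u := by
  have hS : IsCompact (Icc u v ∩ g ⁻¹' {g u}) := isCompact_Icc.of_isClosed_subset
    (hg.preimage_isClosed_of_isClosed isClosed_Icc isClosed_singleton) inter_subset_left
  obtain ⟨a, ⟨ha, hga⟩, hgreatest⟩ := hS.exists_isGreatest ⟨u, left_mem_Icc.2 huv, rfl⟩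
  exact ⟨a, ha, hga, fun x hx hgx => (hgreatest ⟨⟨ha.1.trans hx.1.le, hx.2⟩, hgx⟩).not_gt hx.1⟩

theorem exists_uIcc_subset_image_eq_uIcc {g : ℝ → ℝ} {u v : ℝ} (hg : ContinuousOn g (uIcc u v)) :
    ∃ a b, uIcc a b ⊆ uIcc u v ∧ g '' uIcc a b = uIcc (g u) (g v) := by
  wlog huv : u ≤ v generalizing u v
  · obtain ⟨a, b, hab, himg⟩ := this (uIcc_comm u v ▸ hg) (le_of_not_ge huv)
    exact ⟨a, b, uIcc_comm u v ▸ hab, uIcc_comm (g u) (g v) ▸ himg⟩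
  rw [uIcc_of_le huv] at hg ⊢
  -- `g` attains neither `g u` nor `g v` strictly between `a` and `b`
  obtain ⟨b, hb, hgb, hb_first⟩ := exists_first_eq_right huv hg
  obtain ⟨a, ha, hga, ha_last⟩ := exists_last_eq_left hb.1 (hg.mono (Icc_subset_Icc_right hb.2))
  have hsub : Icc a b ⊆ Icc u v := Icc_subset_Icc ha.1 hb.2
  have hg' : ContinuousOn g (Icc a b) := hg.mono hsub
  refine ⟨a, b, by rwa [uIcc_of_le ha.2], ?_⟩
  rw [uIcc_of_le ha.2]
  refine (image_subset_iff.2 fun x hx => ?_).antisymm ?_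
  · by_contra hgx
    rcases mem_uIcc_or_mem_uIcc_of_notMem_uIcc hgx with hv | hu
    · obtain ⟨t, ht, hgt⟩ := intermediate_value_uIcc
        (hg'.mono (uIcc_subset_Icc (left_mem_Icc.2 ha.2) hx)) (hga ▸ hv)
      rw [uIcc_of_le hx.1] at ht
      obtain rfl : t = b := by_contra fun htb =>
        hb_first t ⟨ha.1.trans ht.1, lt_of_le_of_ne (ht.2.trans hx.2) htb⟩ hgt
      exact hgx (by rw [le_antisymm hx.2 ht.2, mem_preimage, hgb]; exact right_mem_uIcc)
    · obtain ⟨t, ht, hgt⟩ := intermediate_value_uIcc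
        (hg'.mono (uIcc_subset_Icc hx (right_mem_Icc.2 ha.2))) (hgb ▸ hu)
      rw [uIcc_of_le hx.2] at ht
      obtain rfl : t = a := by_contra fun hta =>
        ha_last t ⟨lt_of_le_of_ne (hx.1.trans ht.1) (Ne.symm hta), ht.2⟩ hgt
      exact hgx (by rw [le_antisymm ht.1 hx.1, mem_preimage, hga]; exact left_mem_uIcc)
  · have hivt := intermediate_value_uIcc (a := a) (b := b) (by rwa [uIcc_of_le ha.2])
    rwa [hga, hgb, uIcc_of_le ha.2] at hivt

theorem exists_uIcc_subset_image_eq {g : ℝ → ℝ} {a b k₁ k₂ : ℝ} (hg : ContinuousOn g (uIcc a b))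
    (hk : uIcc k₁ k₂ ⊆ g '' uIcc a b) :
    ∃ a' b', uIcc a' b' ⊆ uIcc a b ∧ g '' uIcc a' b' = uIcc k₁ k₂ := by
  obtain ⟨u, hu, rfl⟩ := hk left_mem_uIcc
  obtain ⟨v, hv, rfl⟩ := hk right_mem_uIcc
  have huv : uIcc u v ⊆ uIcc a b := uIcc_subset_uIcc hu hv
  obtain ⟨a', b', hsub, himg⟩ := exists_uIcc_subset_image_eq_uIcc (hg.mono huv)
  exact ⟨a', b', hsub.trans huv, himg⟩

theorem uIcc_subset_image_of_isFixedPt {g : ℝ → ℝ} {z x : ℝ} (hg : ContinuousOn g (uIcc z x))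
    (hz : IsFixedPt g z) : uIcc z (g x) ⊆ g '' uIcc z x := by
  simpa only [hz.eq] using intermediate_value_uIcc hg

theorem leastPeriod_minimalPeriod (f : ℝ → ℝ) (x : ℝ) : LeastPeriod f x (minimalPeriod f x) :=
  ⟨iterate_minimalPeriod, fun _ hi hlt => not_isPeriodicPt_of_pos_of_lt_minimalPeriod hi.ne' hlt⟩

def NoOddLeastPeriodBelow (f : ℝ → ℝ) (I : Set ℝ) (m : ℕ) : Prop :=
  ∀ k : ℕ, Odd k → 1 < k → k < m → ∀ p ∈ I, ¬ LeastPeriod f p k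

section CoverCycle

variable {f : ℝ → ℝ} {I : Set ℝ}

theorem exists_isPeriodicPt_of_covers (hf : ContinuousOn f I) (hI : MapsTo f I I)
    {j₁ j₂ d₁ d₂ : ℝ} {r s : ℕ} (hJ : uIcc j₁ j₂ ⊆ I) (hD : uIcc d₁ d₂ ⊆ I)
    (hJD : uIcc d₁ d₂ ⊆ f^[s] '' uIcc j₁ j₂) (hDJ : uIcc j₁ j₂ ⊆ f^[r] '' uIcc d₁ d₂) :
    ∃ x ∈ uIcc j₁ j₂, f^[s] x ∈ uIcc d₁ d₂ ∧ IsPeriodicPt f (r + s) x := by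
  obtain ⟨d₁', d₂', hD', hrD'⟩ := exists_uIcc_subset_image_eq ((hf.iterate hI r).mono hD) hDJ
  obtain ⟨j₁', j₂', hJ', hsJ'⟩ :=
    exists_uIcc_subset_image_eq ((hf.iterate hI s).mono hJ) (hD'.trans hJD)
  have hsurj : SurjOn f^[r + s] (uIcc j₁' j₂') (uIcc j₁' j₂') := by
    rw [SurjOn, iterate_add, image_comp, hsJ', hrD']
    exact hJ'
  obtain ⟨x, hx, hfix⟩ :=
    exists_mem_uIcc_isFixedPt_of_surjOn ((hf.iterate hI (r + s)).mono (hJ'.trans hJ)) hsurj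
  exact ⟨x, hJ' hx, hD' (hsJ' ▸ mem_image_of_mem _ hx), hfix⟩

theorem NoOddLeastPeriodBelow.isFixedPt {m n : ℕ} {x : ℝ} (hno : NoOddLeastPeriodBelow f I m)
    (hx : x ∈ I) (hper : IsPeriodicPt f n x) (hn : Odd n) (hnm : n < m) : IsFixedPt f x := by
  have hdvd : minimalPeriod f x ∣ n := hper.minimalPeriod_dvd
  have hpos : 0 < minimalPeriod f x := hper.minimalPeriod_pos hn.pos
  by_contra hfix
  have hne : minimalPeriod f x ≠ 1 := mt minimalPeriod_eq_one_iff_isFixedPt.1 hfix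
  exact hno _ (hn.of_dvd_nat hdvd) (by omega) ((Nat.le_of_dvd hn.pos hdvd).trans_lt hnm) x hx
    (leastPeriod_minimalPeriod f x)

theorem NoOddLeastPeriodBelow.false_of_covers {m : ℕ} (hno : NoOddLeastPeriodBelow f I m)
    (hf : ContinuousOn f I) (hI : MapsTo f I I) {j₁ j₂ d₁ d₂ : ℝ} {r s : ℕ}
    (hJ : uIcc j₁ j₂ ⊆ I) (hD : uIcc d₁ d₂ ⊆ I)
    (hJD : uIcc d₁ d₂ ⊆ f^[s] '' uIcc j₁ j₂) (hDJ : uIcc j₁ j₂ ⊆ f^[r] '' uIcc d₁ d₂)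
    (hodd : Odd (r + s)) (hm : r + s < m) (hfix : ∀ x ∈ uIcc j₁ j₂ ∩ uIcc d₁ d₂, ¬ IsFixedPt f x) :
    False := by
  obtain ⟨x, hxJ, hxD, hper⟩ := exists_isPeriodicPt_of_covers hf hI hJ hD hJD hDJ
  have hx : IsFixedPt f x := hno.isFixedPt (hJ hxJ) hper hodd hm
  exact hfix x ⟨hxJ, (hx.iterate s).eq ▸ hxD⟩ hx

end CoverCycle

theorem strictlyTurbulent_of_two_laps {g : ℝ → ℝ} {I : Set ℝ} {a b c d : ℝ}
    (hab : a < b) (hbc : b < c) (hcd : c < d) (hI : Icc a d ⊆ I) (hg : ContinuousOn g (Icc a d))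
    (h₁ : Icc a d ⊆ uIcc (g a) (g b)) (h₂ : Icc a d ⊆ uIcc (g c) (g d)) :
    StrictlyTurbulent g I := by
  have hJ₀ : Icc a b ⊆ Icc a d := Icc_subset_Icc_right (by linarith)
  have hJ₁ : Icc c d ⊆ Icc a d := Icc_subset_Icc_left (by linarith)
  have himg₀ : Icc a d ⊆ g '' Icc a b :=
    h₁.trans (uIcc_of_le hab.le ▸ intermediate_value_uIcc (uIcc_of_le hab.le ▸ hg.mono hJ₀))
  have himg₁ : Icc a d ⊆ g '' Icc c d :=
    h₂.trans (uIcc_of_le hcd.le ▸ intermediate_value_uIcc (uIcc_of_le hcd.le ▸ hg.mono hJ₁))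
  refine ⟨a, b, c, d, hab, hcd, hJ₀.trans hI, hJ₁.trans hI,
    disjoint_left.2 fun x hx hx' => by linarith [hx.2, hx'.1], ?_⟩
  exact union_subset (hJ₀.trans (subset_inter himg₀ himg₁)) (hJ₁.trans (subset_inter himg₀ himg₁))

section Folds

variable {f : ℝ → ℝ} {I : Set ℝ} [I.OrdConnected] {q z : ℝ}

theorem strictlyTurbulent_iterate_two_of_fold_left (hf : ContinuousOn f I) (hI : MapsTo f I I)
    (hqI : q ∈ I) (hzI : z ∈ I) (hz : IsFixedPt f z) (hqz : q < z) (hfq : z < f q)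
    (hf2q : f (f q) < q) (hf3q : f (f (f q)) < z) : StrictlyTurbulent (f^[2]) I := by
  have hf2qI : f (f q) ∈ I := hI (hI hqI)
  obtain ⟨w, hw, hfw⟩ := intermediate_value_Ioo hf2q.le (hf.mono (Set.Icc_subset I hf2qI hqI))
    ⟨hf3q, hfq⟩
  have hwI : w ∈ I := Set.Icc_subset I hf2qI hqI (Ioo_subset_Icc_self hw)
  have hg : ContinuousOn (f^[2]) (Icc w z) := (hf.iterate hI 2).mono (Set.Icc_subset I hwI hzI)
  have hgz : f^[2] z = z := (hz.iterate 2).eq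
  have hgw : f^[2] w = z := by rw [iterate_succ_apply', iterate_one, hfw, hz.eq]
  obtain ⟨e, he, hge⟩ := intermediate_value_Ioo hqz.le (hg.mono (Icc_subset_Icc_left hw.2.le))
    (show w ∈ Ioo (f^[2] q) (f^[2] z) by rw [hgz]; exact ⟨hw.1, hw.2.trans hqz⟩)
  refine strictlyTurbulent_of_two_laps hw.2 he.1 he.2 (Set.Icc_subset I hwI hzI) hg ?_ ?_
  · change Icc w z ⊆ uIcc (f^[2] w) (f (f q))
    rw [hgw, uIcc_of_ge (hw.1.trans (hw.2.trans hqz)).le]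
    exact Icc_subset_Icc_left hw.1.le
  · rw [hge, hgz]
    exact Icc_subset_uIcc

theorem strictlyTurbulent_iterate_two_of_fold_right (hf : ContinuousOn f I) (hI : MapsTo f I I)
    (hqI : q ∈ I) (hzI : z ∈ I) (hz : IsFixedPt f z) (hzq : z < q) (hfq : f q < z)
    (hf2q : q < f (f q)) (hf3q : z < f (f (f q))) : StrictlyTurbulent (f^[2]) I := by
  have hf2qI : f (f q) ∈ I := hI (hI hqI)
  obtain ⟨w, hw, hfw⟩ := intermediate_value_Ioo hf2q.le (hf.mono (Set.Icc_subset I hqI hf2qI))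
    ⟨hfq, hf3q⟩
  have hwI : w ∈ I := Set.Icc_subset I hqI hf2qI (Ioo_subset_Icc_self hw)
  have hg : ContinuousOn (f^[2]) (Icc z w) := (hf.iterate hI 2).mono (Set.Icc_subset I hzI hwI)
  have hgz : f^[2] z = z := (hz.iterate 2).eq
  have hgw : f^[2] w = z := by rw [iterate_succ_apply', iterate_one, hfw, hz.eq]
  obtain ⟨e, he, hge⟩ := intermediate_value_Ioo' hw.1.le (hg.mono (Icc_subset_Icc_left hzq.le))
    (show w ∈ Ioo (f^[2] w) (f^[2] q) by rw [hgw]; exact ⟨hzq.trans hw.1, hw.2⟩)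
  refine strictlyTurbulent_of_two_laps hzq he.1 he.2 (Set.Icc_subset I hzI hwI) hg ?_ ?_
  · change Icc z w ⊆ uIcc (f^[2] z) (f (f q))
    rw [hgz, uIcc_of_le (hzq.trans (hw.1.trans hw.2)).le]
    exact Icc_subset_Icc_right hw.2.le
  · rw [hge, hgw]
    exact Icc_subset_uIcc'

end Folds

theorem exists_alternating_prefix {P : ℕ → Prop} {m : ℕ} (h0 : P 0) (hm : P m) (hodd : Odd m) :
    ∃ k < m, (∀ j ≤ k, P j ↔ Even j) ∧ (P k ↔ P (k + 1)) := by
  by_contra! h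
  have halt : ∀ k ≤ m, ∀ j ≤ k, P j ↔ Even j := by
    intro k hk
    induction k with
    | zero => intro j hj; simpa [Nat.le_zero.1 hj] using h0
    | succ k ih =>
      have ih := ih (by omega)
      intro j hj
      rcases Nat.lt_or_eq_of_le hj with hj | rfl
      · exact ih j (by omega)
      · have hflip := h k (by omega) ih
        rw [Nat.even_add_one, ← ih k le_rfl]
        tauto
  exact Nat.not_even_iff_odd.2 hodd ((halt m le_rfl m le_rfl).1 hm)

theorem exists_mem_Ioo_isFixedPt {f : ℝ → ℝ} {a b : ℝ} (hf : ContinuousOn f (Icc a b))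
    (hab : a ≤ b) (ha : a < f a) (hb : f b < b) : ∃ c ∈ Ioo a b, IsFixedPt f c := by
  obtain ⟨c, hc, hfc⟩ := exists_mem_Icc_isFixedPt hf hab ha.le hb.le
  refine ⟨c, ⟨lt_of_le_of_ne hc.1 ?_, lt_of_le_of_ne hc.2 ?_⟩, hfc⟩
  · rintro rfl; exact ha.ne' hfc
  · rintro rfl; exact hb.ne hfc

theorem exists_gap_of_finite {f : ℝ → ℝ} {O : Set ℝ} (hO : O.Finite) (hne : O.Nonempty)
    (hmaps : MapsTo f O O) (hfix : ∀ x ∈ O, ¬ IsFixedPt f x) :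
    ∃ b ∈ O, ∃ c ∈ O, b < c ∧ c ≤ f b ∧ f c ≤ b ∧ (∀ x ∈ O, x ≤ b ∨ c ≤ x) ∧
      ∀ x ∈ O, b < x → f x < x := by
  obtain ⟨x₀, hx₀, hmin⟩ := exists_min_image O id hO hne
  obtain ⟨b, ⟨hbO, hb⟩, hbmax⟩ := exists_max_image {x ∈ O | x < f x} id (hO.subset (sep_subset _ _))
    ⟨x₀, hx₀, lt_of_le_of_ne (hmin _ (hmaps hx₀)) (Ne.symm (hfix x₀ hx₀))⟩
  have hleft : ∀ x ∈ O, b < x → f x < x := fun x hx hbx =>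
    (lt_or_gt_of_ne (hfix x hx)).resolve_right fun h => (hbmax x ⟨hx, h⟩).not_gt hbx
  obtain ⟨c, ⟨hcO, hbc⟩, hcmin⟩ := exists_min_image {x ∈ O | b < x} id (hO.subset (sep_subset _ _))
    ⟨f b, hmaps hbO, hb⟩
  have hgap : ∀ x ∈ O, x ≤ b ∨ c ≤ x := fun x hx =>
    (le_or_gt x b).imp_right fun h => hcmin x ⟨hx, h⟩
  refine ⟨b, hbO, c, hcO, hbc, hcmin _ ⟨hmaps hbO, hb⟩, ?_, hgap, hleft⟩
  exact (hgap _ (hmaps hcO)).resolve_right (hleft c hcO hbc).not_ge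

/-- `b` and `c` are the points of the orbit of `b` on either side of the fixed point `z`, and `b`
is the largest orbit point that `f` moves to the right. -/
structure OrbitGap (f : ℝ → ℝ) (b c z : ℝ) : Prop where
  isFixedPt : IsFixedPt f z
  lt_fixedPt : b < z
  fixedPt_lt : z < c
  le_apply : c ≤ f b
  apply_le : f c ≤ b
  iterate_le_or_le : ∀ j, f^[j] b ≤ b ∨ c ≤ f^[j] b
  iterate_succ_lt : ∀ j, b < f^[j] b → f^[j + 1] b < f^[j] b

theorem exists_orbitGap {f : ℝ → ℝ} {I : Set ℝ} [I.OrdConnected] (hf : ContinuousOn f I)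
    (hI : MapsTo f I I) {p : ℝ} {m : ℕ} (hp : p ∈ I) (hper : IsPeriodicPt f m p) (hm : 0 < m)
    (hnfix : ¬ IsFixedPt f p) : ∃ b ∈ I, ∃ c ∈ I, ∃ z, OrbitGap f b c z ∧ IsPeriodicPt f m b := by
  set O := range fun j => f^[j] p
  have hO : O.Finite := ((finite_Iio m).image fun j => f^[j] p).subset
    (range_subset_iff.2 fun j => ⟨j % m, Nat.mod_lt j hm, hper.iterate_mod_apply j⟩)
  have hmaps : MapsTo f O O := by
    rintro _ ⟨j, rfl⟩
    exact ⟨j + 1, iterate_succ_apply' f j p⟩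
  have hfix : ∀ x ∈ O, ¬ IsFixedPt f x := by
    rintro _ ⟨j, rfl⟩ hx
    rw [← minimalPeriod_eq_one_iff_isFixedPt, minimalPeriod_apply_iterate
      (mk_mem_periodicPts hm hper), minimalPeriod_eq_one_iff_isFixedPt] at hx
    exact hnfix hx
  obtain ⟨_, ⟨i, rfl⟩, c, ⟨j, rfl⟩, hbc, hcfb, hfcb, hgap, hleft⟩ :=
    exists_gap_of_finite hO ⟨p, 0, rfl⟩ hmaps hfix
  have horbit : ∀ j, f^[j] (f^[i] p) ∈ O := fun j => ⟨j + i, iterate_add_apply f j i p⟩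
  have hbI : f^[i] p ∈ I := hI.iterate i hp
  have hcI : f^[j] p ∈ I := hI.iterate j hp
  obtain ⟨z, ⟨hbz, hzc⟩, hz⟩ := exists_mem_Ioo_isFixedPt (hf.mono (Set.Icc_subset I hbI hcI))
    hbc.le (hbc.trans_le hcfb) (hleft _ ⟨j, rfl⟩ hbc)
  refine ⟨_, hbI, _, hcI, z, ⟨hz, hbz, hzc, hcfb, hfcb, fun k => hgap _ (horbit k),
    fun k hk => ?_⟩, hper.apply_iterate i⟩
  rw [iterate_succ_apply']
  exact hleft _ (horbit k) hk

namespace OrbitGap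

variable {f : ℝ → ℝ} {I : Set ℝ} [I.OrdConnected] {m : ℕ} {b c z : ℝ}

theorem fixedPt_lt_apply (g : OrbitGap f b c z) : z < f b :=
  g.fixedPt_lt.trans_le g.le_apply

theorem fixedPt_mem (g : OrbitGap f b c z) (hI : MapsTo f I I) (hbI : b ∈ I) : z ∈ I :=
  Set.Icc_subset I hbI (hI hbI) ⟨g.lt_fixedPt.le, g.fixedPt_lt_apply.le⟩

theorem iterate_le_of_lt (g : OrbitGap f b c z) {j : ℕ} (h : f^[j] b < z) : f^[j] b ≤ b :=
  (g.iterate_le_or_le j).resolve_right fun hc => (h.trans (g.fixedPt_lt.trans_le hc)).false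

theorem le_iterate_of_not_lt (g : OrbitGap f b c z) {j : ℕ} (h : ¬ f^[j] b < z) : c ≤ f^[j] b :=
  (g.iterate_le_or_le j).resolve_left fun hb => h (hb.trans_lt g.lt_fixedPt)

/-- The cycle `[b, z] → ⋯ → [w, b] → [b, z]`, of length `s + 1`. -/
theorem false_of_left_cover (g : OrbitGap f b c z) (hno : NoOddLeastPeriodBelow f I m)
    (hf : ContinuousOn f I) (hI : MapsTo f I I) (hbI : b ∈ I) {s : ℕ} {w : ℝ}
    (hsw : f^[s] b ≤ w) (hwb : w ≤ b) (hfw : f w ≤ b) (hs : Even s) (hsm : s + 1 < m) : False := by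
  have hbz := g.lt_fixedPt
  have hzI := g.fixedPt_mem hI hbI
  have hwI : w ∈ I := Set.Icc_subset I (hI.iterate s hbI) hbI ⟨hsw, hwb⟩
  have hJ : uIcc z b ⊆ I := ‹I.OrdConnected›.uIcc_subset hzI hbI
  have hD : uIcc w b ⊆ I := ‹I.OrdConnected›.uIcc_subset hwI hbI
  refine hno.false_of_covers (r := 1) (s := s) hf hI hJ hD ?_ ?_
    (by rw [add_comm]; exact hs.add_one) (by omega) ?_
  · refine subset_trans ?_ (uIcc_subset_image_of_isFixedPt ((hf.iterate hI s).mono hJ)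
      (g.isFixedPt.iterate s))
    rw [uIcc_of_le hwb, uIcc_of_ge (hsw.trans (hwb.trans hbz.le))]
    exact Icc_subset_Icc hsw hbz.le
  · rw [iterate_one]
    refine subset_trans ?_ (intermediate_value_uIcc (hf.mono hD))
    rw [uIcc_of_ge hbz.le, uIcc_of_le (hfw.trans (hbz.trans g.fixedPt_lt_apply).le)]
    exact Icc_subset_Icc hfw g.fixedPt_lt_apply.le
  · rintro x ⟨hxJ, hxD⟩ hx
    rw [uIcc_of_ge hbz.le] at hxJ
    rw [uIcc_of_le hwb] at hxD
    obtain rfl : x = b := le_antisymm hxD.2 hxJ.1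
    exact (hbz.trans g.fixedPt_lt_apply).ne' hx

/-- The cycle `[b, z] → ⋯ → [c, w] → [z, c] → [b, z]`, of length `s + 2`. -/
theorem false_of_right_cover (g : OrbitGap f b c z) (hno : NoOddLeastPeriodBelow f I m)
    (hf : ContinuousOn f I) (hI : MapsTo f I I) (hbI : b ∈ I) (hcI : c ∈ I) {s : ℕ} {w : ℝ}
    (hcw : c ≤ w) (hws : w ≤ f^[s] b) (hfw : c ≤ f w) (hs : Odd s) (hsm : s + 2 < m) : False := by
  have hbz := g.lt_fixedPt
  have hzc := g.fixedPt_lt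
  have hzI := g.fixedPt_mem hI hbI
  have hwI : w ∈ I := Set.Icc_subset I hcI (hI.iterate s hbI) ⟨hcw, hws⟩
  have hJ : uIcc z b ⊆ I := ‹I.OrdConnected›.uIcc_subset hzI hbI
  have hD : uIcc c w ⊆ I := ‹I.OrdConnected›.uIcc_subset hcI hwI
  refine hno.false_of_covers (r := 2) (s := s) hf hI hJ hD ?_ ?_
    (by rw [add_comm]; exact hs.add_even even_two) (by omega) ?_
  · refine subset_trans ?_ (uIcc_subset_image_of_isFixedPt ((hf.iterate hI s).mono hJ)
      (g.isFixedPt.iterate s))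
    rw [uIcc_of_le hcw, uIcc_of_le (hzc.le.trans (hcw.trans hws))]
    exact Icc_subset_Icc hzc.le hws
  · have hzcf : uIcc z c ⊆ f '' uIcc c w := by
      refine subset_trans ?_ (intermediate_value_uIcc (hf.mono hD))
      rw [uIcc_of_le hzc.le, uIcc_of_le (g.apply_le.trans (hbz.trans (hzc.trans_le hfw)).le)]
      exact Icc_subset_Icc (g.apply_le.trans hbz.le) hfw
    have hbzf : uIcc z b ⊆ f '' uIcc z c := by
      refine subset_trans ?_ (uIcc_subset_image_of_isFixedPt
        (hf.mono (‹I.OrdConnected›.uIcc_subset hzI hcI)) g.isFixedPt)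
      rw [uIcc_of_ge hbz.le, uIcc_of_ge (g.apply_le.trans hbz.le)]
      exact Icc_subset_Icc_left g.apply_le
    rw [iterate_succ, iterate_one, image_comp]
    exact hbzf.trans (image_mono hzcf)
  · rintro x ⟨hxJ, hxD⟩ -
    rw [uIcc_of_ge hbz.le] at hxJ
    rw [uIcc_of_le hcw] at hxD
    linarith [hxJ.2, hxD.1]

theorem strictlyTurbulent_of_even (g : OrbitGap f b c z) (hno : NoOddLeastPeriodBelow f I m)
    (hf : ContinuousOn f I) (hI : MapsTo f I I) (hbI : b ∈ I) (hper : IsPeriodicPt f m b)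
    {k : ℕ} (hkm : k < m) (halt : ∀ j ≤ k, f^[j] b < z ↔ Even j)
    (hrep : f^[k] b < z ↔ f^[k + 1] b < z) (hk : Even k) : StrictlyTurbulent (f^[2]) I := by
  have hxk : f^[k] b < z := (halt k le_rfl).2 hk
  have hxk1 : f^[k + 1] b < z := hrep.1 hxk
  obtain rfl : m = k + 1 := by
    by_contra hne
    refine g.false_of_left_cover hno hf hI hbI le_rfl (g.iterate_le_of_lt hxk) ?_ hk (by omega)
    rw [← iterate_succ_apply' f k b]
    exact g.iterate_le_of_lt hxk1
  have hk0 : k ≠ 0 := by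
    rintro rfl
    exact g.fixedPt_lt_apply.not_gt hxk1
  obtain ⟨j, rfl⟩ : ∃ j, k = j + 2 := by
    obtain ⟨i, rfl⟩ := hk
    exact ⟨i + i - 2, by omega⟩
  have hj : Even j := by simpa [Nat.even_add] using hk
  have hfx : f (f (f (f^[j] b))) = b := by simpa only [iterate_succ_apply'] using hper.eq
  rcases le_or_gt (f^[j] b) (f^[j + 2] b) with hle | hlt
  · refine (g.false_of_left_cover hno hf hI hbI hle (g.iterate_le_of_lt hxk) ?_ hj
      (by omega)).elim
    simp only [iterate_succ_apply'] at hfx ⊢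
    exact hfx.le
  · refine strictlyTurbulent_iterate_two_of_fold_left hf hI (hI.iterate j hbI)
      (g.fixedPt_mem hI hbI) g.isFixedPt ((halt j (by omega)).2 hj) ?_ (by simpa only [iterate_succ_apply'] using hlt)
      (by rw [hfx]; exact g.lt_fixedPt)
    have h := (halt (j + 1) (by omega)).not.2 (by simpa [Nat.even_add_one] using hj)
    exact g.fixedPt_lt.trans_le (iterate_succ_apply' f j b ▸ g.le_iterate_of_not_lt h)

theorem strictlyTurbulent_of_odd (g : OrbitGap f b c z) (hno : NoOddLeastPeriodBelow f I m)
    (hf : ContinuousOn f I) (hI : MapsTo f I I) (hbI : b ∈ I) (hcI : c ∈ I)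
    (hper : IsPeriodicPt f m b) (hmodd : Odd m)
    {k : ℕ} (hkm : k < m) (halt : ∀ j ≤ k, f^[j] b < z ↔ Even j)
    (hrep : f^[k] b < z ↔ f^[k + 1] b < z) (hk : Odd k) : StrictlyTurbulent (f^[2]) I := by
  have hnk : ¬ f^[k] b < z := by rw [halt k le_rfl]; exact Nat.not_even_iff_odd.2 hk
  have hxk : c ≤ f^[k] b := g.le_iterate_of_not_lt hnk
  have hxk1 : c ≤ f^[k + 1] b := g.le_iterate_of_not_lt (hrep.not.1 hnk)
  obtain rfl : m = k + 2 := by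
    by_contra hne
    refine g.false_of_right_cover hno hf hI hbI hcI hxk le_rfl ?_ hk ?_
    · rw [← iterate_succ_apply' f k b]
      exact hxk1
    · obtain ⟨i, rfl⟩ := hmodd
      obtain ⟨i', rfl⟩ := hk
      omega
  have hfx : f (f^[k + 1] b) = b := by rw [← iterate_succ_apply' f (k + 1) b]; exact hper.eq
  rcases Nat.lt_or_ge k 3 with hk3 | hk3
  · obtain rfl : k = 1 := by obtain ⟨i, rfl⟩ := hk; omega
    simp only [iterate_succ_apply', iterate_zero_apply] at hxk1 hfx
    have hlt : f (f b) < f b := by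
      simpa only [iterate_succ_apply', iterate_zero_apply] using
        g.iterate_succ_lt 1 (g.lt_fixedPt.trans g.fixedPt_lt_apply)
    refine strictlyTurbulent_iterate_two_of_fold_right hf hI (hI (hI hbI)) (g.fixedPt_mem hI hbI)
      g.isFixedPt (g.fixedPt_lt.trans_le hxk1) ?_ ?_ ?_ <;> rw [hfx]
    exacts [g.lt_fixedPt, hlt, g.fixedPt_lt.trans_le hxk1]
  · obtain ⟨j, rfl⟩ : ∃ j, k = j + 2 := ⟨k - 2, by omega⟩
    have hj : Odd j := by simpa [Nat.odd_add] using hk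
    rcases le_or_gt (f^[j + 2] b) (f^[j] b) with hle | hlt
    · refine (g.false_of_right_cover hno hf hI hbI hcI hxk hle ?_ hj (by omega)).elim
      rw [← iterate_succ_apply' f (j + 2) b]
      exact hxk1
    · have hzq : z < f^[j] b := g.fixedPt_lt.trans_le (g.le_iterate_of_not_lt
        ((halt j (by omega)).not.2 (Nat.not_even_iff_odd.2 hj)))
      have hfq : f^[j + 1] b < z :=
        (halt (j + 1) (by omega)).2 (by simpa [Nat.even_add_one] using hj)
      simp only [iterate_succ_apply'] at hfq hlt hxk1
      exact strictlyTurbulent_iterate_two_of_fold_right hf hI (hI.iterate j hbI)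
        (g.fixedPt_mem hI hbI) g.isFixedPt hzq hfq hlt (g.fixedPt_lt.trans_le hxk1)

end OrbitGap

theorem iterate_two_strictly_turbulent_of_least_odd_period_general
    (A B : ℝ) (f : ℝ → ℝ)
    (hf : ContinuousOn f (Set.Icc A B))
    (hmap : Set.MapsTo f (Set.Icc A B) (Set.Icc A B))
    (m : ℕ) (hm3 : 3 ≤ m) (hmodd : Odd m)
    (hex : ∃ p ∈ Set.Icc A B, LeastPeriod f p m)
    (hno : ∀ k : ℕ, Odd k → 1 < k → k < m → ∀ p ∈ Set.Icc A B, ¬ LeastPeriod f p k) :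
    StrictlyTurbulent (f^[2]) (Set.Icc A B) := by
  obtain ⟨p, hpI, hpm, hpmin⟩ := hex
  obtain ⟨b, hbI, c, hcI, z, g, hper⟩ :=
    exists_orbitGap hf hmap hpI hpm (by omega) (hpmin 1 one_pos (by omega))
  obtain ⟨k, hkm, halt, hrep⟩ :=
    exists_alternating_prefix (P := fun j => f^[j] b < z) g.lt_fixedPt
      (by rw [hper.eq]; exact g.lt_fixedPt) hmodd
  rcases Nat.even_or_odd k with hk | hk
  · exact g.strictlyTurbulent_of_even hno hf hmap hbI hper hkm halt hrep hk
  · exact g.strictlyTurbulent_of_odd hno hf hmap hbI hcI hper hmodd hkm halt hrep hk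

/-- part of Theorem 4 of the paper. If `f` has a periodic point of odd
least period `m ≥ 3` and no periodic point of odd least period `k` with `1 < k < m`,
then `f²` is strictly turbulent. -/
theorem iterate_two_strictly_turbulent_of_least_odd_period
    (A B : ℝ) (hAB : A ≤ B) (f : ℝ → ℝ)
    (hf : ContinuousOn f (Set.Icc A B))
    (hmap : Set.MapsTo f (Set.Icc A B) (Set.Icc A B))
    (m : ℕ) (hm3 : 3 ≤ m) (hmodd : Odd m)
    (hex : ∃ p ∈ Set.Icc A B, LeastPeriod f p m)
    (hno : ∀ k : ℕ, Odd k → 1 < k → k < m → ∀ p ∈ Set.Icc A B, ¬ LeastPeriod f p k) :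
    StrictlyTurbulent (f^[2]) (Set.Icc A B) :=
  iterate_two_strictly_turbulent_of_least_odd_period_general A B f hf hmap m hm3 hmodd hex hno
end

section
/- For every positive integer i, let fᵢ : [1, 2i+1] → [1, 2i+1] be the continuous map determined by: fᵢ(1) = i+1, fᵢ(2) = 2i+1, fᵢ(i+1) = i+2, fᵢ(i+1+1/3) = i+1+2/3, fᵢ(i+1+2/3) = i+1+1/3, fᵢ(i+2) = i, fᵢ(2i+1) = 1, and fᵢ is linear on each of the intervals [1,2], [2, i+1], [i+1, i+1+1/3], [i+1+1/3, i+1+2/3], [i+1+2/3, i+2], and [i+2, 2i+1]. Then fᵢ has a periodic point of least period 2i+1 (indeed {1, 2, …, 2i+1} is a periodic orbit of fᵢ of least period 2i+1), but for every δ > 0, fᵢ has no nonempty δ-scrambled set that is invariant under fᵢ. -/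
open Filter Set Function

/-- `f` is linear (affine) on the interval `[p, q]`. -/
def LinOn (f : ℝ → ℝ) (p q : ℝ) : Prop :=
  ∀ x ∈ Set.Icc p q, f x = f p + (f q - f p) / (q - p) * (x - p)

/-!
On the integers, `f` permutes `1, …, 2i+1` cyclically:
`1 ↦ i+1 ↦ i+2 ↦ i ↦ i+3 ↦ ⋯ ↦ 2 ↦ 2i+1 ↦ 1`.

A point `x` of an invariant scrambled set is not periodic, while `f x` lies in the set too, so the
orbit of `x` returns arbitrarily close to the orbit of `f x`: some point of the set is moved by `f`
less than `1/3`. But `f` moves every point by at least `1/3`, except on the middle third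
`[i + 4/3, i + 5/3]`, where it is the reflection `x ↦ 2i + 3 - x`, so all points there have
period 2.
-/

lemma limsupD_self (f : ℝ → ℝ) (x : ℝ) : limsupD f x x = 0 := by
  simp [limsupD]

namespace ScrambledSet

variable {f : ℝ → ℝ} {I S : Set ℝ} {δ : ℝ}

lemma not_perPt (hS : ScrambledSet f I δ S) (hδ : 0 < δ) {x : ℝ} (hx : x ∈ S) :
    ¬ PerPt f x := fun hper => by
  have := hS.2.2 x hx x (hS.1 hx) hper
  rw [limsupD_self] at this
  linarith

lemma exists_abs_apply_sub_lt {a b : ℝ} (hS : ScrambledSet f (Icc a b) δ S) (hδ : 0 < δ)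
    (hSf : MapsTo f S S) {x : ℝ} (hx : x ∈ S) {ε : ℝ} (hε : 0 < ε) :
    ∃ y ∈ S, |f y - y| < ε := by
  have hfx : f x ≠ x := fun h => hS.not_perPt hδ hx ⟨1, one_pos, h⟩
  have hliminf : liminfD f x (f x) = 0 := (hS.2.1 x hx (f x) (hSf hx) hfx.symm).2
  have hbdd : ∀ n : ℕ, |f^[n] x - f^[n] (f x)| ≤ b - a := fun n =>
    Real.dist_le_of_mem_Icc (hS.1 (hSf.iterate n hx)) (hS.1 (hSf.iterate n (hSf hx)))
  have hfreq : ∃ᶠ n in atTop, |f^[n] x - f^[n] (f x)| < ε :=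
    frequently_lt_of_liminf_lt (isCoboundedUnder_ge_of_le atTop hbdd)
      (by rwa [← liminfD, hliminf])
  obtain ⟨n, hn⟩ := hfreq.exists
  refine ⟨f^[n] x, hSf.iterate n hx, ?_⟩
  rwa [abs_sub_comm, ← iterate_succ_apply' f, iterate_succ_apply]

theorem eq_empty_of_perPt_of_abs_sub_lt {a b : ℝ} (hS : ScrambledSet f (Icc a b) δ S)
    (hδ : 0 < δ) (hSf : MapsTo f S S) {ε : ℝ} (hε : 0 < ε)
    (hper : ∀ y ∈ Icc a b, |f y - y| < ε → PerPt f y) : S = ∅ := by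
  refine eq_empty_of_forall_notMem fun x hx => ?_
  obtain ⟨y, hy, hfy⟩ := hS.exists_abs_apply_sub_lt hδ hSf hx hε
  exact hS.not_perPt hδ hy (hper y (hS.1 hy) hfy)

end ScrambledSet

lemma LinOn.apply_eq_sub {f : ℝ → ℝ} {p q c : ℝ} (h : LinOn f p q) (hp : f p = c - p)
    (hq : f q = c - q) {x : ℝ} (hx : x ∈ Icc p q) : f x = c - x := by
  rcases eq_or_ne p q with rfl | hpq
  · -- the degenerate piece `[2, i + 1]` for `i = 1`, where the slope in `LinOn` is `0 / 0`
    rw [Icc_self, mem_singleton_iff] at hx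
    rw [hx, hp]
  · have : q - p ≠ 0 := sub_ne_zero.2 hpq.symm
    rw [h x hx, hp, hq]
    field_simp
    ring

structure StefanMap (i : ℕ) (f : ℝ → ℝ) : Prop where
  pos : 0 < i
  apply_one : f 1 = (i : ℝ) + 1
  apply_two : f 2 = 2 * (i : ℝ) + 1
  apply_add_one : f ((i : ℝ) + 1) = (i : ℝ) + 2
  apply_add_four_thirds : f ((i : ℝ) + 1 + 1/3) = (i : ℝ) + 1 + 2/3
  apply_add_five_thirds : f ((i : ℝ) + 1 + 2/3) = (i : ℝ) + 1 + 1/3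
  apply_add_two : f ((i : ℝ) + 2) = (i : ℝ)
  apply_two_mul_add_one : f (2 * (i : ℝ) + 1) = 1
  linOn_one_two : LinOn f 1 2
  linOn_two_add_one : LinOn f 2 ((i : ℝ) + 1)
  linOn_add_one_add_four_thirds : LinOn f ((i : ℝ) + 1) ((i : ℝ) + 1 + 1/3)
  linOn_add_four_thirds_add_five_thirds : LinOn f ((i : ℝ) + 1 + 1/3) ((i : ℝ) + 1 + 2/3)
  linOn_add_five_thirds_add_two : LinOn f ((i : ℝ) + 1 + 2/3) ((i : ℝ) + 2)
  linOn_add_two_two_mul_add_one : LinOn f ((i : ℝ) + 2) (2 * (i : ℝ) + 1)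

namespace StefanMap

variable {i : ℕ} {f : ℝ → ℝ} {x : ℝ}

lemma one_le_cast (hf : StefanMap i f) : (1 : ℝ) ≤ i := by
  exact_mod_cast hf.pos

lemma apply_of_mem_Icc_one_two (hf : StefanMap i f) (hx : x ∈ Icc 1 2) :
    f x = i + 1 + i * (x - 1) := by
  rw [hf.linOn_one_two x hx, hf.apply_one, hf.apply_two]
  ring

lemma apply_of_mem_Icc_two_add_five_thirds (hf : StefanMap i f)
    (hx : x ∈ Icc 2 ((i : ℝ) + 1 + 2/3)) : f x = 2 * i + 3 - x := by
  rcases le_total x ((i : ℝ) + 1) with hx₁ | hx₁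
  · exact hf.linOn_two_add_one.apply_eq_sub (by rw [hf.apply_two]; ring)
      (by rw [hf.apply_add_one]; ring) ⟨hx.1, hx₁⟩
  rcases le_total x ((i : ℝ) + 1 + 1/3) with hx₂ | hx₂
  · exact hf.linOn_add_one_add_four_thirds.apply_eq_sub (by rw [hf.apply_add_one]; ring)
      (by rw [hf.apply_add_four_thirds]; ring) ⟨hx₁, hx₂⟩
  · exact hf.linOn_add_four_thirds_add_five_thirds.apply_eq_sub
      (by rw [hf.apply_add_four_thirds]; ring) (by rw [hf.apply_add_five_thirds]; ring) ⟨hx₂, hx.2⟩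

lemma apply_of_mem_Icc_add_five_thirds_add_two (hf : StefanMap i f)
    (hx : x ∈ Icc ((i : ℝ) + 1 + 2/3) ((i : ℝ) + 2)) : f x = 5 * i + 8 - 4 * x := by
  rw [hf.linOn_add_five_thirds_add_two x hx, hf.apply_add_five_thirds, hf.apply_add_two]
  ring

lemma apply_of_mem_Icc_add_two_two_mul_add_one (hf : StefanMap i f)
    (hx : x ∈ Icc ((i : ℝ) + 2) (2 * i + 1)) : f x = 2 * i + 2 - x :=
  hf.linOn_add_two_two_mul_add_one.apply_eq_sub (by rw [hf.apply_add_two]; ring)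
    (by rw [hf.apply_two_mul_add_one]; ring) hx

lemma apply_apply_of_mem_middle (hf : StefanMap i f)
    (hx : x ∈ Icc ((i : ℝ) + 1 + 1/3) ((i : ℝ) + 1 + 2/3)) : f (f x) = x := by
  have hi := hf.one_le_cast
  rw [hf.apply_of_mem_Icc_two_add_five_thirds ⟨by linarith [hx.1], hx.2⟩,
    hf.apply_of_mem_Icc_two_add_five_thirds ⟨by linarith [hx.2], by linarith [hx.1]⟩]
  ring

lemma mem_middle_of_abs_apply_sub_lt (hf : StefanMap i f) (hx : x ∈ Icc 1 (2 * (i : ℝ) + 1))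
    (hfx : |f x - x| < 1/3) : x ∈ Icc ((i : ℝ) + 1 + 1/3) ((i : ℝ) + 1 + 2/3) := by
  have hi := hf.one_le_cast
  obtain ⟨hlt, hgt⟩ := abs_lt.mp hfx
  by_contra hmid
  rcases le_total x 2 with hx₂ | hx₂
  · have := hf.apply_of_mem_Icc_one_two ⟨hx.1, hx₂⟩
    nlinarith [mul_nonneg (sub_nonneg.2 hi) (sub_nonneg.2 hx.1)]
  rcases le_total x ((i : ℝ) + 1 + 2/3) with hx₃ | hx₃
  · have := hf.apply_of_mem_Icc_two_add_five_thirds ⟨hx₂, hx₃⟩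
    exact hmid ⟨by linarith, hx₃⟩
  rcases le_total x ((i : ℝ) + 2) with hx₄ | hx₄
  · have := hf.apply_of_mem_Icc_add_five_thirds_add_two ⟨hx₃, hx₄⟩
    linarith
  · have := hf.apply_of_mem_Icc_add_two_two_mul_add_one ⟨hx₄, hx.2⟩
    linarith

lemma perPt_of_abs_apply_sub_lt (hf : StefanMap i f) (hx : x ∈ Icc 1 (2 * (i : ℝ) + 1))
    (hfx : |f x - x| < 1/3) : PerPt f x :=
  ⟨2, two_pos, hf.apply_apply_of_mem_middle (hf.mem_middle_of_abs_apply_sub_lt hx hfx)⟩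

lemma iterate_one (hf : StefanMap i f) {k : ℕ} (hk : k < i) :
    f^[2 * k + 1] 1 = i + 1 - k ∧ f^[2 * k + 2] 1 = i + 2 + k := by
  induction k with
  | zero =>
    have h₁ : f^[1] 1 = i + 1 := hf.apply_one
    refine ⟨by simpa using h₁, ?_⟩
    rw [iterate_succ_apply', h₁, hf.apply_add_one]
    simp
  | succ k ih =>
    have hk' : (k : ℝ) + 2 ≤ i := by exact_mod_cast hk
    obtain ⟨-, h₂⟩ := ih (by omega)
    have h₃ : f^[2 * k + 3] 1 = i + 1 - (k + 1) := by
      rw [iterate_succ_apply', h₂,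
        hf.apply_of_mem_Icc_add_two_two_mul_add_one ⟨by linarith, by linarith⟩]
      ring
    have h₄ : f^[2 * k + 4] 1 = i + 2 + (k + 1) := by
      rw [iterate_succ_apply', h₃,
        hf.apply_of_mem_Icc_two_add_five_thirds ⟨by linarith, by linarith⟩]
      ring
    push_cast
    exact ⟨h₃, h₄⟩

lemma iterate_two_mul_add_one_one (hf : StefanMap i f) : f^[2 * i + 1] 1 = 1 := by
  have h := (hf.iterate_one (k := i - 1) (by have := hf.pos; omega)).2
  rw [show 2 * (i - 1) + 2 = 2 * i by have := hf.pos; omega, Nat.cast_sub hf.pos] at h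
  rw [iterate_succ_apply', h, ← hf.apply_two_mul_add_one]
  ring_nf

lemma exists_natCast_eq_iterate_one (hf : StefanMap i f) {n : ℕ} (hn₀ : 0 < n)
    (hn : n < 2 * i + 1) : ∃ j : ℕ, 2 ≤ j ∧ j ≤ 2 * i + 1 ∧ f^[n] 1 = j := by
  obtain ⟨k, rfl | rfl⟩ : ∃ k, n = 2 * k + 1 ∨ n = 2 * k + 2 :=
    ⟨(n - 1) / 2, by omega⟩
  · refine ⟨i + 1 - k, by omega, by omega, ?_⟩
    rw [(hf.iterate_one (by omega)).1, Nat.cast_sub (by omega)]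
    push_cast
    ring
  · refine ⟨i + 2 + k, by omega, by omega, ?_⟩
    rw [(hf.iterate_one (by omega)).2]
    push_cast
    ring

lemma exists_iterate_one_eq_natCast (hf : StefanMap i f) {j : ℕ} (hj₁ : 1 ≤ j)
    (hj : j ≤ 2 * i + 1) : ∃ n, f^[n] 1 = j := by
  rcases Nat.lt_trichotomy j 1 with _ | rfl | hj₁
  · omega
  · exact ⟨0, by simp⟩
  rcases le_or_gt j (i + 1) with hj₂ | hj₂
  · refine ⟨2 * (i + 1 - j) + 1, ?_⟩
    rw [(hf.iterate_one (by omega)).1, Nat.cast_sub hj₂]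
    push_cast
    ring
  · refine ⟨2 * (j - (i + 2)) + 2, ?_⟩
    rw [(hf.iterate_one (by omega)).2, Nat.cast_sub (by omega)]
    push_cast
    ring

lemma leastPeriod_one (hf : StefanMap i f) : LeastPeriod f 1 (2 * i + 1) := by
  refine ⟨hf.iterate_two_mul_add_one_one, fun n hn₀ hn h => ?_⟩
  obtain ⟨j, hj, -, hfj⟩ := hf.exists_natCast_eq_iterate_one hn₀ hn
  have : (2 : ℝ) ≤ j := by exact_mod_cast hj
  linarith

lemma orbit_one (hf : StefanMap i f) :
    {x : ℝ | ∃ j : ℕ, 1 ≤ j ∧ j ≤ 2 * i + 1 ∧ x = j} = {y : ℝ | ∃ n : ℕ, f^[n] 1 = y} := by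
  ext x
  constructor
  · rintro ⟨j, hj₁, hj, rfl⟩
    exact hf.exists_iterate_one_eq_natCast hj₁ hj
  · rintro ⟨n, rfl⟩
    have hper : IsPeriodicPt f (2 * i + 1) 1 := hf.iterate_two_mul_add_one_one
    rw [← hper.iterate_mod_apply n]
    rcases Nat.eq_zero_or_pos (n % (2 * i + 1)) with h | h
    · exact ⟨1, le_rfl, by omega, by simp [h]⟩
    · obtain ⟨j, hj, hj', hfj⟩ :=
        hf.exists_natCast_eq_iterate_one h (Nat.mod_lt _ (by omega))
      exact ⟨j, by omega, hj', hfj⟩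

end StefanMap

/-- Remark 2 of the paper. For every positive integer `i`, the
piecewise linear map `fᵢ : [1, 2i+1] → [1, 2i+1]` described in the paper has
`{1, 2, …, 2i+1}` as a periodic orbit of least period `2i+1`, but has no nonempty
invariant `δ`-scrambled set for any `δ > 0`. -/
theorem stefan_period_without_invariant_scrambled_set
    (i : ℕ) (hi : 0 < i) (f : ℝ → ℝ)
    (v1 : f 1 = (i : ℝ) + 1)
    (v2 : f 2 = 2 * (i : ℝ) + 1)
    (v3 : f ((i : ℝ) + 1) = (i : ℝ) + 2)
    (v4 : f ((i : ℝ) + 1 + 1/3) = (i : ℝ) + 1 + 2/3)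
    (v5 : f ((i : ℝ) + 1 + 2/3) = (i : ℝ) + 1 + 1/3)
    (v6 : f ((i : ℝ) + 2) = (i : ℝ))
    (v7 : f (2 * (i : ℝ) + 1) = 1)
    (l1 : LinOn f 1 2)
    (l2 : LinOn f 2 ((i : ℝ) + 1))
    (l3 : LinOn f ((i : ℝ) + 1) ((i : ℝ) + 1 + 1/3))
    (l4 : LinOn f ((i : ℝ) + 1 + 1/3) ((i : ℝ) + 1 + 2/3))
    (l5 : LinOn f ((i : ℝ) + 1 + 2/3) ((i : ℝ) + 2))
    (l6 : LinOn f ((i : ℝ) + 2) (2 * (i : ℝ) + 1)) :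
    (LeastPeriod f 1 (2 * i + 1) ∧
      {x : ℝ | ∃ j : ℕ, 1 ≤ j ∧ j ≤ 2 * i + 1 ∧ x = (j : ℝ)} =
        {y : ℝ | ∃ n : ℕ, f^[n] 1 = y}) ∧
    ∀ δ > 0, ∀ S : Set ℝ,
      ScrambledSet f (Set.Icc 1 (2 * (i : ℝ) + 1)) δ S → Set.MapsTo f S S → S = ∅ := by
  have hf : StefanMap i f := ⟨hi, v1, v2, v3, v4, v5, v6, v7, l1, l2, l3, l4, l5, l6⟩
  exact ⟨⟨hf.leastPeriod_one, hf.orbit_one⟩, fun δ hδ S hS hSf =>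
    hS.eq_empty_of_perPt_of_abs_sub_lt hδ hSf (by norm_num)
      fun _ hy hfy => hf.perPt_of_abs_apply_sub_lt hy hfy⟩
end
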